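/- arXiv:2012.09795 — 5 statements merged into one kernel-verified Lean document; each statement's English description precedes it below -/
import Mathlib

section
/- Consider the target Newton-seeking system ẋ(t) = k·F(v(t)), v̇(t) = −K·F(H*·v(t) + ∇h(x(t))) on ℝᵖ × ℝᵖ, where a solution is a continuously differentiable pair (x,v) : [0,∞) → ℝᵖ × ℝᵖ satisfying these equations for all t ≥ 0. Then for any gain k > 0 there exists K* > 0 such that for every K > K* the point (x*, 0) is a globally finite-time stable equilibrium: (i) the constant function (x*,0) is a solution; (ii) for every ε > 0 there exists δ > 0 such that every solution with ‖x(0) − x*‖² + ‖v(0)‖² < δ² satisfies ‖x(t) − x*‖² + ‖v(t)‖² < ε² for all t ≥ 0; and (iii) for every solution there exists a finite settling time T₀ ≥ 0 such that x(t) = x* and v(t) = 0 for all t ≥ T₀. -/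
attribute [local instance] Classical.propDecidable

open scoped InnerProductSpace

/-- The scaling factor `γ(w) = c₁‖w‖^{-α₁} + c₂‖w‖^{-α₂}` (Euclidean norm, real powers). -/
noncomputable def gammaFun {n : ℕ} (c₁ c₂ α₁ α₂ : ℝ) (w : EuclideanSpace ℝ (Fin n)) : ℝ :=
  c₁ * ‖w‖ ^ (-α₁) + c₂ * ‖w‖ ^ (-α₂)

/-- The map `F(w) = γ(w)·w` for `w ≠ 0`, with `F(0) = 0`. -/
noncomputable def Fmap {n : ℕ} (c₁ c₂ α₁ α₂ : ℝ) (w : EuclideanSpace ℝ (Fin n)) :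
    EuclideanSpace ℝ (Fin n) :=
  if w = 0 then 0 else gammaFun c₁ c₂ α₁ α₂ w • w

/-- Matrix-vector multiplication viewed as a map on Euclidean space. -/
noncomputable def mulVecE {n : ℕ} (H : Matrix (Fin n) (Fin n) ℝ)
    (w : EuclideanSpace ℝ (Fin n)) : EuclideanSpace ℝ (Fin n) :=
  (EuclideanSpace.equiv (Fin n) ℝ).symm (H.mulVec (EuclideanSpace.equiv (Fin n) ℝ w))

/-- Matrix-vector multiplication as a continuous linear map on Euclidean space. -/
noncomputable def mulVecCLM {n : ℕ} (H : Matrix (Fin n) (Fin n) ℝ) :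
    EuclideanSpace ℝ (Fin n) →L[ℝ] EuclideanSpace ℝ (Fin n) :=
  LinearMap.toContinuousLinearMap (Matrix.toEuclideanLin H)

/-- A solution of the target Newton-seeking system
`ẋ = k F(v)`, `v̇ = -K F(H* v + ∇h(x))` on `[0,∞)`. -/
def IsTargetSol {p : ℕ} (c₁ c₂ α₁ α₂ k K : ℝ) (h : EuclideanSpace ℝ (Fin p) → ℝ)
    (Hstar : Matrix (Fin p) (Fin p) ℝ)
    (x v : ℝ → EuclideanSpace ℝ (Fin p)) : Prop :=
  (∀ t : ℝ, 0 ≤ t → HasDerivAt x (k • Fmap c₁ c₂ α₁ α₂ (v t)) t) ∧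
  (∀ t : ℝ, 0 ≤ t →
    HasDerivAt v (-(K • Fmap c₁ c₂ α₁ α₂ (mulVecE Hstar (v t) + gradient h (x t)))) t)


/-!
Since the Hessian is constant, `∇h(x) = H* (x - x*)`, and in the error coordinates
`s = x - x* + v` and `v` the system reads `ṡ = k F(v) - K F(H* s)`, `v̇ = -K F(H* s)`.
The function `W = ½⟪s, H* s⟫ + (α_h/4)‖v‖² - (α_h/2)⟪v, s⟫` is comparable to
`‖x - x*‖² + ‖v‖²`, and once `K` dominates the cross term `k ⟪H* s, F v⟫` it obeys
`Ẇ ≤ -κ W ^ (1 - α₁/2)`. The exponent is below one because of the `c₁‖w‖^{-α₁}` part of `F`,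
so `W`, and with it the state error, reaches zero in finite time; stability holds because `W`
does not increase.
-/

open Set

lemma antitoneOn_of_forall_hasDerivAt_nonpos {D : Set ℝ} (hD : Convex ℝ D) {f f' : ℝ → ℝ}
    (hf : ∀ t ∈ D, HasDerivAt f (f' t) t) (hf' : ∀ t ∈ D, f' t ≤ 0) : AntitoneOn f D :=
  antitoneOn_of_hasDerivWithinAt_nonpos hD
    (fun t ht => (hf t ht).continuousAt.continuousWithinAt)
    (fun t ht => (hf t (interior_subset ht)).hasDerivWithinAt)
    (fun t ht => hf' t (interior_subset ht))

section FiniteTime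

variable {V V' : ℝ → ℝ} {κ β : ℝ}

lemma antitoneOn_of_hasDerivAt_le_neg_rpow (hκ : 0 ≤ κ) (hV0 : ∀ t, 0 ≤ t → 0 ≤ V t)
    (hV : ∀ t, 0 ≤ t → HasDerivAt V (V' t) t) (hV' : ∀ t, 0 ≤ t → V' t ≤ -κ * V t ^ β) :
    AntitoneOn V (Ici 0) :=
  antitoneOn_of_forall_hasDerivAt_nonpos (convex_Ici 0) hV fun t ht => by
    linarith [hV' t ht, mul_nonneg hκ (Real.rpow_nonneg (hV0 t ht) β)]

/-- Finite-time extinction: while `V > 0`, the function `V ^ (1 - β) + κ (1 - β) t` does not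
increase, so `V` must vanish by time `V 0 ^ (1 - β) / (κ (1 - β))`. -/
lemma eq_zero_of_hasDerivAt_le_neg_rpow (hκ : 0 < κ) (hβ : β < 1)
    (hV0 : ∀ t, 0 ≤ t → 0 ≤ V t) (hV : ∀ t, 0 ≤ t → HasDerivAt V (V' t) t)
    (hV' : ∀ t, 0 ≤ t → V' t ≤ -κ * V t ^ β) {t : ℝ}
    (ht : V 0 ^ (1 - β) / (κ * (1 - β)) ≤ t) : V t = 0 := by
  set T := V 0 ^ (1 - β) / (κ * (1 - β))
  have hκβ : 0 < κ * (1 - β) := mul_pos hκ (sub_pos.2 hβ)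
  have hT : 0 ≤ T := div_nonneg (Real.rpow_nonneg (hV0 0 le_rfl) _) hκβ.le
  suffices ∃ t₀ ∈ Icc 0 T, V t₀ = 0 by
    obtain ⟨t₀, ⟨ht₀, ht₀T⟩, hVt₀⟩ := this
    have hanti := antitoneOn_of_hasDerivAt_le_neg_rpow hκ.le hV0 hV hV'
    exact le_antisymm (hVt₀ ▸ hanti ht₀ (hT.trans ht) (ht₀T.trans ht)) (hV0 t (hT.trans ht))
  by_contra! hne
  have hpos : ∀ t ∈ Icc 0 T, 0 < V t := fun t ht => (hV0 t ht.1).lt_of_ne (hne t ht).symm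
  have hφ : AntitoneOn (fun t => V t ^ (1 - β) + κ * (1 - β) * t) (Icc 0 T) := by
    refine antitoneOn_of_forall_hasDerivAt_nonpos (convex_Icc 0 T)
      (fun t ht => ((hV t ht.1).rpow_const (Or.inl (hpos t ht).ne')).add
        ((hasDerivAt_id t).const_mul _)) fun t ht => ?_
    have hVt := hpos t ht
    have hcancel : V t ^ β * V t ^ (1 - β - 1) = 1 := by
      rw [← Real.rpow_add hVt]; simp
    have := mul_le_mul_of_nonneg_right (hV' t ht.1) (Real.rpow_nonneg hVt.le (1 - β - 1))
    nlinarith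
  have hφT := hφ ⟨le_rfl, hT⟩ ⟨hT, le_rfl⟩ hT
  have hκT : κ * (1 - β) * T = V 0 ^ (1 - β) := mul_div_cancel₀ _ hκβ.ne'
  have := Real.rpow_pos_of_pos (hpos T ⟨hT, le_rfl⟩) (1 - β)
  simp only [hκT, mul_zero, add_zero] at hφT
  linarith

end FiniteTime

section Fmap

variable {n : ℕ} {c₁ c₂ α₁ α₂ : ℝ}

lemma Fmap_zero : Fmap c₁ c₂ α₁ α₂ (0 : EuclideanSpace ℝ (Fin n)) = 0 := if_pos rfl

lemma gammaFun_nonneg (hc₁ : 0 ≤ c₁) (hc₂ : 0 ≤ c₂) (w : EuclideanSpace ℝ (Fin n)) :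
    0 ≤ gammaFun c₁ c₂ α₁ α₂ w := by
  unfold gammaFun; positivity

lemma inner_Fmap_self (hc₁ : 0 ≤ c₁) (hc₂ : 0 ≤ c₂) (w : EuclideanSpace ℝ (Fin n)) :
    ⟪w, Fmap c₁ c₂ α₁ α₂ w⟫_ℝ = ‖w‖ * ‖Fmap c₁ c₂ α₁ α₂ w‖ := by
  by_cases hw : w = 0
  · simp [hw, Fmap_zero]
  · rw [Fmap, if_neg hw, real_inner_smul_right, real_inner_self_eq_norm_sq, norm_smul,
      Real.norm_of_nonneg (gammaFun_nonneg hc₁ hc₂ w)]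
    ring

lemma norm_Fmap (hc₁ : 0 ≤ c₁) (hc₂ : 0 ≤ c₂) (hα₁ : α₁ < 1) (hα₂ : α₂ < 1)
    (w : EuclideanSpace ℝ (Fin n)) :
    ‖Fmap c₁ c₂ α₁ α₂ w‖ = c₁ * ‖w‖ ^ (1 - α₁) + c₂ * ‖w‖ ^ (1 - α₂) := by
  by_cases hw : w = 0
  · simp [hw, Fmap_zero, Real.zero_rpow (sub_ne_zero.2 hα₁.ne'),
      Real.zero_rpow (sub_ne_zero.2 hα₂.ne')]
  · have hw' : ‖w‖ ≠ 0 := norm_ne_zero_iff.2 hw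
    rw [Fmap, if_neg hw, norm_smul, Real.norm_of_nonneg (gammaFun_nonneg hc₁ hc₂ w), gammaFun,
      sub_eq_neg_add 1 α₁, sub_eq_neg_add 1 α₂, Real.rpow_add_one hw', Real.rpow_add_one hw']
    ring

lemma mul_rpow_le_inner_Fmap_self (hc₁ : 0 ≤ c₁) (hc₂ : 0 ≤ c₂) (hα₁ : α₁ < 1)
    (hα₂ : α₂ < 1) (w : EuclideanSpace ℝ (Fin n)) :
    c₁ * ‖w‖ ^ (2 - α₁) ≤ ⟪w, Fmap c₁ c₂ α₁ α₂ w⟫_ℝ := by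
  rw [inner_Fmap_self hc₁ hc₂, norm_Fmap hc₁ hc₂ hα₁ hα₂,
    show 2 - α₁ = 1 + (1 - α₁) by ring, Real.rpow_one_add' (norm_nonneg w) (by linarith)]
  have : 0 ≤ ‖w‖ * (c₂ * ‖w‖ ^ (1 - α₂)) := by positivity
  linarith

lemma mul_rpow_le_add_inner_Fmap_self (hc₁ : 0 ≤ c₁) (hc₂ : 0 ≤ c₂) (hα₁ : 0 < α₁)
    (hα₁' : α₁ < 1) (hα₂ : α₂ < 1) (u w : EuclideanSpace ℝ (Fin n)) :
    c₁ * (‖u‖ ^ 2 + ‖w‖ ^ 2) ^ (1 - α₁ / 2) ≤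
      ⟪u, Fmap c₁ c₂ α₁ α₂ u⟫_ℝ + ⟪w, Fmap c₁ c₂ α₁ α₂ w⟫_ℝ := by
  have hsq (z : EuclideanSpace ℝ (Fin n)) : (‖z‖ ^ 2) ^ (1 - α₁ / 2) = ‖z‖ ^ (2 - α₁) := by
    rw [← Real.rpow_natCast, ← Real.rpow_mul (norm_nonneg z)]
    ring_nf
  calc c₁ * (‖u‖ ^ 2 + ‖w‖ ^ 2) ^ (1 - α₁ / 2)
      ≤ c₁ * ((‖u‖ ^ 2) ^ (1 - α₁ / 2) + (‖w‖ ^ 2) ^ (1 - α₁ / 2)) :=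
        mul_le_mul_of_nonneg_left
          (Real.rpow_add_le_add_rpow (by positivity) (by positivity) (by linarith) (by linarith))
          hc₁
    _ = c₁ * ‖u‖ ^ (2 - α₁) + c₁ * ‖w‖ ^ (2 - α₁) := by rw [hsq, hsq, mul_add]
    _ ≤ _ := add_le_add (mul_rpow_le_inner_Fmap_self hc₁ hc₂ hα₁' hα₂ u)
        (mul_rpow_le_inner_Fmap_self hc₁ hc₂ hα₁' hα₂ w)

lemma norm_Fmap_le_of_norm_le_mul (hc₁ : 0 ≤ c₁) (hc₂ : 0 ≤ c₂) (hα₁ : α₁ < 1)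
    (hα₂ : α₂ < 1) {ε : ℝ} (hε : 0 ≤ ε) {u w : EuclideanSpace ℝ (Fin n)}
    (h : ‖w‖ ≤ ε * ‖u‖) :
    ‖Fmap c₁ c₂ α₁ α₂ w‖ ≤ (ε ^ (1 - α₁) + ε ^ (1 - α₂)) * ‖Fmap c₁ c₂ α₁ α₂ u‖ := by
  have hpow {α : ℝ} (hα : α < 1) : ‖w‖ ^ (1 - α) ≤ ε ^ (1 - α) * ‖u‖ ^ (1 - α) := by
    rw [← Real.mul_rpow hε (norm_nonneg u)]
    exact Real.rpow_le_rpow (norm_nonneg w) h (by linarith)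
  rw [norm_Fmap hc₁ hc₂ hα₁ hα₂, norm_Fmap hc₁ hc₂ hα₁ hα₂]
  have := mul_le_mul_of_nonneg_left (hpow hα₁) hc₁
  have := mul_le_mul_of_nonneg_left (hpow hα₂) hc₂
  have : 0 ≤ ε ^ (1 - α₂) * (c₁ * ‖u‖ ^ (1 - α₁)) := by positivity
  have : 0 ≤ ε ^ (1 - α₁) * (c₂ * ‖u‖ ^ (1 - α₂)) := by positivity
  linarith

lemma norm_mul_norm_Fmap_le (hc₁ : 0 ≤ c₁) (hc₂ : 0 ≤ c₂) (hα₁ : α₁ < 1) (hα₂ : α₂ < 1)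
    {ε : ℝ} (hε : 0 < ε) (u w : EuclideanSpace ℝ (Fin n)) :
    ‖u‖ * ‖Fmap c₁ c₂ α₁ α₂ w‖ ≤
      ε⁻¹ * ⟪w, Fmap c₁ c₂ α₁ α₂ w⟫_ℝ +
        (ε ^ (1 - α₁) + ε ^ (1 - α₂)) * ⟪u, Fmap c₁ c₂ α₁ α₂ u⟫_ℝ := by
  rw [inner_Fmap_self hc₁ hc₂, inner_Fmap_self hc₁ hc₂]
  rcases le_total ‖u‖ (ε⁻¹ * ‖w‖) with h | h
  · have := mul_le_mul_of_nonneg_right h (norm_nonneg (Fmap c₁ c₂ α₁ α₂ w))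
    have : 0 ≤ (ε ^ (1 - α₁) + ε ^ (1 - α₂)) * (‖u‖ * ‖Fmap c₁ c₂ α₁ α₂ u‖) := by positivity
    linarith
  · have hw : ‖w‖ ≤ ε * ‖u‖ := by rwa [inv_mul_le_iff₀ hε] at h
    have := mul_le_mul_of_nonneg_left
      (norm_Fmap_le_of_norm_le_mul hc₁ hc₂ hα₁ hα₂ hε.le hw) (norm_nonneg u)
    have : 0 ≤ ε⁻¹ * (‖w‖ * ‖Fmap c₁ c₂ α₁ α₂ w‖) := by positivity
    linarith

end Fmap

lemma norm_add_sq_add_norm_sq_le {E : Type*} [SeminormedAddCommGroup E] (y v : E) :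
    ‖y + v‖ ^ 2 + ‖v‖ ^ 2 ≤ 3 * (‖y‖ ^ 2 + ‖v‖ ^ 2) := by
  nlinarith [norm_add_le y v, norm_nonneg (y + v), norm_nonneg y, norm_nonneg v,
    sq_nonneg (‖y‖ - ‖v‖)]

section Lyapunov

variable {E : Type*} [NormedAddCommGroup E] [InnerProductSpace ℝ E]

noncomputable def lyapunovFun (L : E →L[ℝ] E) (c : ℝ) (s v : E) : ℝ :=
  ⟪s, L s⟫_ℝ / 2 + c / 2 * ‖v‖ ^ 2 - c * ⟪v, s⟫_ℝ

lemma mul_norm_le_norm_of_mul_sq_le_inner {L : E → E} {a : ℝ}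
    (hL : ∀ w, a * ‖w‖ ^ 2 ≤ ⟪w, L w⟫_ℝ) (w : E) : a * ‖w‖ ≤ ‖L w‖ := by
  rcases eq_or_ne w 0 with rfl | hw
  · simp
  · refine le_of_mul_le_mul_left ?_ (norm_pos_iff.2 hw)
    nlinarith [hL w, real_inner_le_norm w (L w)]

variable {L : E →L[ℝ] E}

lemma lyapunovFun_le {c : ℝ} (hc : 0 ≤ c) (s v : E) :
    lyapunovFun L c s v ≤ (‖L‖ + c) * (‖s‖ ^ 2 + ‖v‖ ^ 2) := by
  have hsLs : ⟪s, L s⟫_ℝ ≤ ‖L‖ * ‖s‖ ^ 2 :=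
    (real_inner_le_norm s (L s)).trans (by nlinarith [L.le_opNorm s, norm_nonneg s])
  have hvs : -⟪v, s⟫_ℝ ≤ (‖v‖ ^ 2 + ‖s‖ ^ 2) / 2 := by
    nlinarith [neg_le_of_abs_le (abs_real_inner_le_norm v s), sq_nonneg (‖v‖ - ‖s‖)]
  unfold lyapunovFun
  nlinarith [mul_le_mul_of_nonneg_left hvs hc, mul_nonneg (norm_nonneg L) (sq_nonneg ‖v‖),
    mul_nonneg (norm_nonneg L) (sq_nonneg ‖s‖), mul_nonneg hc (sq_nonneg ‖s‖)]

lemma mul_add_le_lyapunovFun {a : ℝ} (ha : 0 ≤ a) (hL : ∀ w, a * ‖w‖ ^ 2 ≤ ⟪w, L w⟫_ℝ)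
    (s v : E) : a / 12 * (‖s‖ ^ 2 + ‖v‖ ^ 2) ≤ lyapunovFun L (a / 2) s v := by
  have hvs := mul_le_mul_of_nonneg_left (real_inner_le_norm v s) ha
  unfold lyapunovFun
  nlinarith [hL s, mul_nonneg ha (sq_nonneg (5 * ‖s‖ - 3 * ‖v‖)),
    mul_nonneg ha (sq_nonneg ‖v‖)]

lemma mul_add_le_lyapunovFun_add {a : ℝ} (ha : 0 ≤ a) (hL : ∀ w, a * ‖w‖ ^ 2 ≤ ⟪w, L w⟫_ℝ)
    (y v : E) : a / 36 * (‖y‖ ^ 2 + ‖v‖ ^ 2) ≤ lyapunovFun L (a / 2) (y + v) v := by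
  have := norm_add_sq_add_norm_sq_le (y + v) (-v)
  rw [add_neg_cancel_right, norm_neg] at this
  nlinarith [mul_add_le_lyapunovFun ha hL (y + v) v, mul_le_mul_of_nonneg_left this ha]

lemma lyapunovFun_add_le {c : ℝ} (hc : 0 ≤ c) (y v : E) :
    lyapunovFun L c (y + v) v ≤ 3 * (‖L‖ + c) * (‖y‖ ^ 2 + ‖v‖ ^ 2) :=
  calc _ ≤ (‖L‖ + c) * (‖y + v‖ ^ 2 + ‖v‖ ^ 2) := lyapunovFun_le hc _ _
    _ ≤ (‖L‖ + c) * (3 * (‖y‖ ^ 2 + ‖v‖ ^ 2)) :=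
        mul_le_mul_of_nonneg_left (norm_add_sq_add_norm_sq_le y v) (by positivity)
    _ = _ := by ring

lemma norm_sq_add_norm_sq_le_of_antitoneOn {a : ℝ} (ha : 0 < a)
    (hL : ∀ w, a * ‖w‖ ^ 2 ≤ ⟪w, L w⟫_ℝ) {y v : ℝ → E}
    (hanti : AntitoneOn (fun t => lyapunovFun L (a / 2) (y t + v t) (v t)) (Ici 0)) {t : ℝ}
    (ht : 0 ≤ t) :
    ‖y t‖ ^ 2 + ‖v t‖ ^ 2 ≤ 108 * (‖L‖ + a / 2) / a * (‖y 0‖ ^ 2 + ‖v 0‖ ^ 2) := by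
  have hWt := mul_add_le_lyapunovFun_add ha.le hL (y t) (v t)
  have hW0 := lyapunovFun_add_le (L := L) (c := a / 2) (by positivity) (y 0) (v 0)
  have hdecay := hanti (mem_Ici.2 le_rfl) (mem_Ici.2 ht) ht
  beta_reduce at hdecay
  rw [div_mul_eq_mul_div, le_div_iff₀ ha]
  linarith

lemma eq_zero_of_lyapunovFun_add_eq_zero {a : ℝ} (ha : 0 < a)
    (hL : ∀ w, a * ‖w‖ ^ 2 ≤ ⟪w, L w⟫_ℝ) {y v : E} (h : lyapunovFun L (a / 2) (y + v) v = 0) :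
    y = 0 ∧ v = 0 := by
  have hW := mul_add_le_lyapunovFun_add ha.le hL y v
  rw [h] at hW
  have hN : ‖y‖ ^ 2 + ‖v‖ ^ 2 = 0 :=
    le_antisymm (nonpos_of_mul_nonpos_right hW (by positivity)) (by positivity)
  simpa using (add_eq_zero_iff_of_nonneg (sq_nonneg _) (sq_nonneg _)).1 hN

lemma hasDerivAt_lyapunovFun (hL : (L : E →ₗ[ℝ] E).IsSymmetric) {c k K : ℝ} {s v : ℝ → E}
    {f g : E} {t : ℝ} (hs : HasDerivAt s (k • f - K • g) t) (hv : HasDerivAt v (-(K • g)) t) :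
    HasDerivAt (fun t => lyapunovFun L c (s t) (v t))
      (k * ⟪L (s t), f⟫_ℝ - K * ⟪L (s t), g⟫_ℝ + c * K * ⟪g, s t⟫_ℝ - c * k * ⟪v t, f⟫_ℝ)
      t := by
  have hLs : HasDerivAt (fun t => L (s t)) (L (k • f - K • g)) t :=
    L.hasFDerivAt.comp_hasDerivAt t hs
  refine ((((hs.inner ℝ hLs).div_const 2).add (hv.norm_sq.const_mul (c / 2))).sub
    ((hv.inner ℝ hs).const_mul c)).congr_deriv ?_
  have hsym : ⟪s t, L (k • f - K • g)⟫_ℝ = ⟪L (s t), k • f - K • g⟫_ℝ := (hL _ _).symm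
  rw [hsym, real_inner_comm (L (s t)) (k • f - K • g)]
  simp only [inner_sub_right, inner_neg_left, inner_neg_right, real_inner_smul_left,
    real_inner_smul_right]
  ring

end Lyapunov

section Dissipation

variable {n : ℕ} {c₁ c₂ α₁ α₂ a k K : ℝ}

local notation "F" => Fmap c₁ c₂ α₁ α₂

/-- The constant `4 / a` balances the cross term `k ⟪η, F v⟫` against the dissipation
`- a k / 2 ⟪v, F v⟫`; the gain condition on `K` then absorbs what is left into `- K ⟪η, F η⟫`. -/
lemma lyapunov_rate_le (hc₁ : 0 ≤ c₁) (hc₂ : 0 ≤ c₂) (hα₁ : α₁ < 1) (hα₂ : α₂ < 1)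
    (ha : 0 < a) (hk : 0 ≤ k) (hK : 4 * k * ((4 / a) ^ (1 - α₁) + (4 / a) ^ (1 - α₂)) ≤ K)
    {s v η : EuclideanSpace ℝ (Fin n)} (hsη : a * ‖s‖ ≤ ‖η‖) :
    k * ⟪η, F v⟫_ℝ - K * ⟪η, F η⟫_ℝ + a / 2 * K * ⟪F η, s⟫_ℝ - a / 2 * k * ⟪v, F v⟫_ℝ ≤
      -(min K (a * k) / 4) * (⟪v, F v⟫_ℝ + ⟪η, F η⟫_ℝ) := by
  set e := (4 / a) ^ (1 - α₁) + (4 / a) ^ (1 - α₂)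
  have he : 0 ≤ e := by positivity
  have hK0 : 0 ≤ K := le_trans (by positivity) hK
  have hPv : 0 ≤ ⟪v, F v⟫_ℝ := by rw [inner_Fmap_self hc₁ hc₂]; positivity
  have hPη : 0 ≤ ⟪η, F η⟫_ℝ := by rw [inner_Fmap_self hc₁ hc₂]; positivity
  have hcross : ⟪η, F v⟫_ℝ ≤ a / 4 * ⟪v, F v⟫_ℝ + e * ⟪η, F η⟫_ℝ := by
    have := norm_mul_norm_Fmap_le hc₁ hc₂ hα₁ hα₂ (by positivity : 0 < 4 / a) η v
    rw [inv_div] at this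
    exact (real_inner_le_norm _ _).trans this
  have hcoupling : a * ⟪F η, s⟫_ℝ ≤ ⟪η, F η⟫_ℝ := by
    rw [inner_Fmap_self hc₁ hc₂]
    nlinarith [real_inner_le_norm (F η) s, mul_le_mul_of_nonneg_left hsη (norm_nonneg (F η))]
  have hmin : min K (a * k) ≤ K := min_le_left _ _
  have hmin' : min K (a * k) ≤ a * k := min_le_right _ _
  nlinarith [mul_le_mul_of_nonneg_left hcross hk, mul_le_mul_of_nonneg_left hcoupling hK0,
    mul_le_mul_of_nonneg_right hK hPη, mul_le_mul_of_nonneg_right hmin hPη,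
    mul_le_mul_of_nonneg_right hmin' hPv]

lemma exists_lyapunov_rate_le_neg_rpow (hc₁ : 0 < c₁) (hc₂ : 0 ≤ c₂) (hα₁ : 0 < α₁)
    (hα₁' : α₁ < 1) (hα₂ : α₂ < 1) (ha : 0 < a) (hk : 0 < k)
    (hK : 4 * k * ((4 / a) ^ (1 - α₁) + (4 / a) ^ (1 - α₂)) ≤ K)
    {L : EuclideanSpace ℝ (Fin n) →L[ℝ] EuclideanSpace ℝ (Fin n)}
    (hL : ∀ w, a * ‖w‖ ^ 2 ≤ ⟪w, L w⟫_ℝ) :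
    ∃ κ > 0, ∀ s v : EuclideanSpace ℝ (Fin n),
      k * ⟪L s, F v⟫_ℝ - K * ⟪L s, F (L s)⟫_ℝ + a / 2 * K * ⟪F (L s), s⟫_ℝ -
          a / 2 * k * ⟪v, F v⟫_ℝ ≤
        -κ * lyapunovFun L (a / 2) s v ^ (1 - α₁ / 2) := by
  set β := 1 - α₁ / 2
  set C := (‖L‖ + a / 2) * (1 + a⁻¹ ^ 2)
  set m := min K (a * k) / 4
  have hC : 0 < C := by positivity
  have hm : 0 < m := by
    have : 0 < K := lt_of_lt_of_le (by positivity) hK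
    positivity
  refine ⟨m * c₁ / C ^ β, by positivity, fun s v => ?_⟩
  set W := lyapunovFun L (a / 2) s v
  have hW0 : 0 ≤ W := le_trans (by positivity) (mul_add_le_lyapunovFun ha.le hL s v)
  have hWC : W ≤ C * (‖v‖ ^ 2 + ‖L s‖ ^ 2) := by
    have hs : ‖s‖ ^ 2 ≤ a⁻¹ ^ 2 * ‖L s‖ ^ 2 := by
      rw [← mul_pow]
      refine pow_le_pow_left₀ (norm_nonneg s) ?_ 2
      rw [le_inv_mul_iff₀ ha]
      exact mul_norm_le_norm_of_mul_sq_le_inner hL s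
    refine (lyapunovFun_le (by positivity) s v).trans ?_
    rw [mul_assoc]
    refine mul_le_mul_of_nonneg_left ?_ (by positivity)
    nlinarith [sq_nonneg ‖v‖, sq_nonneg ‖L s‖, sq_nonneg a⁻¹,
      mul_nonneg (sq_nonneg a⁻¹) (sq_nonneg ‖v‖)]
  have hpow : (W / C) ^ β ≤ (‖v‖ ^ 2 + ‖L s‖ ^ 2) ^ β :=
    Real.rpow_le_rpow (by positivity) (by rwa [div_le_iff₀' hC]) (by simp only [β]; linarith)
  calc _ ≤ -m * (⟪v, F v⟫_ℝ + ⟪L s, F (L s)⟫_ℝ) :=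
        lyapunov_rate_le hc₁.le hc₂ hα₁' hα₂ ha hk.le hK
          (mul_norm_le_norm_of_mul_sq_le_inner hL s)
    _ ≤ -m * (c₁ * (‖v‖ ^ 2 + ‖L s‖ ^ 2) ^ β) := by
        have := mul_rpow_le_add_inner_Fmap_self hc₁.le hc₂ hα₁ hα₁' hα₂ v (L s)
        nlinarith
    _ ≤ -m * (c₁ * (W / C) ^ β) := by
        have := mul_le_mul_of_nonneg_left hpow (mul_nonneg hm.le hc₁.le)
        nlinarith
    _ = -(m * c₁ / C ^ β) * W ^ β := by
        rw [Real.div_rpow hW0 hC.le]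
        field_simp

end Dissipation

lemma apply_eq_apply_add_of_hasFDerivAt {E G : Type*} [NormedAddCommGroup E] [NormedSpace ℝ E]
    [NormedAddCommGroup G] [NormedSpace ℝ G] {g : E → G} {L : E →L[ℝ] G}
    (hg : ∀ x, HasFDerivAt g L x) (x y : E) : g y = g x + L (y - x) := by
  have hderiv (z : E) : HasFDerivAt (fun z => g z - L z) (0 : E →L[ℝ] G) z := by
    have := (hg z).sub L.hasFDerivAt
    rwa [sub_self] at this
  have := is_const_of_fderiv_eq_zero (fun z => (hderiv z).differentiableAt)
    (fun z => (hderiv z).fderiv) y x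
  rw [map_sub]
  linear_combination (norm := module) this

section NewtonSeeking

variable {p : ℕ} {c₁ c₂ α₁ α₂ k K : ℝ} {h : EuclideanSpace ℝ (Fin p) → ℝ}
  {H : Matrix (Fin p) (Fin p) ℝ} {xstar : EuclideanSpace ℝ (Fin p)}

lemma isTargetSol_const (hcrit : gradient h xstar = 0) :
    IsTargetSol c₁ c₂ α₁ α₂ k K h H (fun _ => xstar) (fun _ => 0) := by
  have hH0 : mulVecE H 0 = 0 := map_zero (mulVecCLM H)
  refine ⟨fun t _ => ?_, fun t _ => ?_⟩
  · simpa [Fmap_zero] using hasDerivAt_const t xstar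
  · simpa [hH0, hcrit, Fmap_zero] using hasDerivAt_const t (0 : EuclideanSpace ℝ (Fin p))

variable {x v : ℝ → EuclideanSpace ℝ (Fin p)}

lemma IsTargetSol.hasDerivAt_lyapunovFun (hsol : IsTargetSol c₁ c₂ α₁ α₂ k K h H x v)
    (hH : H.IsSymm) (hgrad : ∀ y, gradient h y = mulVecCLM H (y - xstar)) (c : ℝ) {t : ℝ}
    (ht : 0 ≤ t) :
    HasDerivAt (fun t => lyapunovFun (mulVecCLM H) c (x t - xstar + v t) (v t))
      (k * ⟪mulVecCLM H (x t - xstar + v t), Fmap c₁ c₂ α₁ α₂ (v t)⟫_ℝ -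
        K * ⟪mulVecCLM H (x t - xstar + v t),
          Fmap c₁ c₂ α₁ α₂ (mulVecCLM H (x t - xstar + v t))⟫_ℝ +
        c * K * ⟪Fmap c₁ c₂ α₁ α₂ (mulVecCLM H (x t - xstar + v t)), x t - xstar + v t⟫_ℝ -
        c * k * ⟪v t, Fmap c₁ c₂ α₁ α₂ (v t)⟫_ℝ) t := by
  have hsymm : (mulVecCLM H : EuclideanSpace ℝ (Fin p) →ₗ[ℝ] _).IsSymmetric :=
    Matrix.isSymmetric_toEuclideanLin_iff.2 (Matrix.isHermitian_iff_isSymm.2 hH)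
  have hη : mulVecE H (v t) + gradient h (x t) = mulVecCLM H (x t - xstar + v t) := by
    rw [hgrad, map_add, add_comm]
    rfl
  have hv := hsol.2 t ht
  rw [hη] at hv
  have hs := ((hsol.1 t ht).sub_const xstar).add hv
  rw [← sub_eq_add_neg] at hs
  exact _root_.hasDerivAt_lyapunovFun hsymm hs hv

theorem IsTargetSol.lyapunovFun_settles {a : ℝ} (hsol : IsTargetSol c₁ c₂ α₁ α₂ k K h H x v)
    (hc₁ : 0 < c₁) (hc₂ : 0 ≤ c₂) (hα₁ : 0 < α₁) (hα₁' : α₁ < 1) (hα₂ : α₂ < 1) (ha : 0 < a)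
    (hk : 0 < k) (hK : 4 * k * ((4 / a) ^ (1 - α₁) + (4 / a) ^ (1 - α₂)) ≤ K)
    (hH : H.IsSymm) (hL : ∀ w, a * ‖w‖ ^ 2 ≤ ⟪w, mulVecCLM H w⟫_ℝ)
    (hgrad : ∀ y, gradient h y = mulVecCLM H (y - xstar)) :
    AntitoneOn (fun t => lyapunovFun (mulVecCLM H) (a / 2) (x t - xstar + v t) (v t)) (Ici 0) ∧
      ∃ T₀, 0 ≤ T₀ ∧ ∀ t, T₀ ≤ t →
        lyapunovFun (mulVecCLM H) (a / 2) (x t - xstar + v t) (v t) = 0 := by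
  obtain ⟨κ, hκ, hrate⟩ :=
    exists_lyapunov_rate_le_neg_rpow hc₁ hc₂ hα₁ hα₁' hα₂ ha hk hK hL
  have hW0 (t : ℝ) (_ : 0 ≤ t) :
      0 ≤ lyapunovFun (mulVecCLM H) (a / 2) (x t - xstar + v t) (v t) :=
    le_trans (by positivity) (mul_add_le_lyapunovFun ha.le hL _ _)
  have hW' (t : ℝ) (ht : 0 ≤ t) := hsol.hasDerivAt_lyapunovFun hH hgrad (a / 2) ht
  exact ⟨antitoneOn_of_hasDerivAt_le_neg_rpow hκ.le hW0 hW' (fun t _ => hrate _ _), _,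
    div_nonneg (Real.rpow_nonneg (hW0 0 le_rfl) _) (mul_pos hκ (by linarith)).le, fun t ht =>
      eq_zero_of_hasDerivAt_le_neg_rpow hκ (by linarith) hW0 hW' (fun t _ => hrate _ _) ht⟩

end NewtonSeeking

theorem stmt0_general (p : ℕ) (c₁ c₂ q₁ q₂ α₁ α₂ : ℝ)
    (hc₁ : 0 < c₁) (hc₂ : 0 < c₂)
    (hq₁ : 2 < q₁) (hq₂₁ : 1 < q₂)
    (hα₁ : α₁ = (q₁ - 2) / (q₁ - 1)) (hα₂ : α₂ = (q₂ - 2) / (q₂ - 1))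
    (h : EuclideanSpace ℝ (Fin p) → ℝ)
    (xstar : EuclideanSpace ℝ (Fin p))
    (hcrit : ∀ x : EuclideanSpace ℝ (Fin p), gradient h x = 0 ↔ x = xstar)
    (Hstar : Matrix (Fin p) (Fin p) ℝ) (hHsymm : Hstar.IsSymm)
    (αh : ℝ) (hαh : 0 < αh)
    (hHlb : ∀ w : EuclideanSpace ℝ (Fin p), αh * ‖w‖ ^ 2 ≤ ⟪w, mulVecE Hstar w⟫_ℝ)
    (hhess : ∀ x : EuclideanSpace ℝ (Fin p), HasFDerivAt (gradient h) (mulVecCLM Hstar) x) :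
    ∀ k > (0 : ℝ), ∃ Kstar > (0 : ℝ), ∀ K > Kstar,
      -- (i) the constant function (x*, 0) is a solution
      IsTargetSol c₁ c₂ α₁ α₂ k K h Hstar (fun _ => xstar) (fun _ => 0) ∧
      -- (ii) Lyapunov stability
      (∀ ε > (0 : ℝ), ∃ δ > (0 : ℝ), ∀ x v : ℝ → EuclideanSpace ℝ (Fin p),
        IsTargetSol c₁ c₂ α₁ α₂ k K h Hstar x v →
        ‖x 0 - xstar‖ ^ 2 + ‖v 0‖ ^ 2 < δ ^ 2 →
        ∀ t : ℝ, 0 ≤ t → ‖x t - xstar‖ ^ 2 + ‖v t‖ ^ 2 < ε ^ 2) ∧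
      -- (iii) finite-time convergence of every solution
      (∀ x v : ℝ → EuclideanSpace ℝ (Fin p),
        IsTargetSol c₁ c₂ α₁ α₂ k K h Hstar x v →
        ∃ T₀ : ℝ, 0 ≤ T₀ ∧ ∀ t : ℝ, T₀ ≤ t → x t = xstar ∧ v t = 0) := by
  intro k hk
  have hα₁0 : 0 < α₁ := hα₁ ▸ div_pos (by linarith) (by linarith)
  have hα₁1 : α₁ < 1 := hα₁ ▸ (div_lt_one (by linarith)).2 (by linarith)
  have hα₂1 : α₂ < 1 := hα₂ ▸ (div_lt_one (by linarith)).2 (by linarith)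
  have hL : ∀ w, αh * ‖w‖ ^ 2 ≤ ⟪w, mulVecCLM Hstar w⟫_ℝ := hHlb
  have hcrit₀ : gradient h xstar = 0 := (hcrit xstar).2 rfl
  have hgrad (y : EuclideanSpace ℝ (Fin p)) : gradient h y = mulVecCLM Hstar (y - xstar) := by
    rw [apply_eq_apply_add_of_hasFDerivAt hhess xstar y, hcrit₀, zero_add]
  refine ⟨4 * k * ((4 / αh) ^ (1 - α₁) + (4 / αh) ^ (1 - α₂)), by positivity,
    fun K hK => ⟨isTargetSol_const hcrit₀, fun ε hε => ?_, fun x v hsol => ?_⟩⟩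
  · set M := 108 * (‖mulVecCLM Hstar‖ + αh / 2) / αh
    refine ⟨ε / √M, by positivity, fun x v hsol h0 t ht => ?_⟩
    obtain ⟨hanti, -⟩ := hsol.lyapunovFun_settles hc₁ hc₂.le hα₁0 hα₁1 hα₂1 hαh hk hK.le
      hHsymm hL hgrad
    rw [div_pow, Real.sq_sqrt (by positivity), lt_div_iff₀ (by positivity), mul_comm] at h0
    exact (norm_sq_add_norm_sq_le_of_antitoneOn hαh hL hanti ht).trans_lt h0
  · obtain ⟨-, T₀, hT₀, hzero⟩ := hsol.lyapunovFun_settles hc₁ hc₂.le hα₁0 hα₁1 hα₂1 hαh hk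
      hK.le hHsymm hL hgrad
    refine ⟨T₀, hT₀, fun t ht => ?_⟩
    simpa [sub_eq_zero] using eq_zero_of_lyapunovFun_add_eq_zero hαh hL (hzero t ht)

theorem stmt0 (p : ℕ) (c₁ c₂ q₁ q₂ α₁ α₂ : ℝ)
    (hc₁ : 0 < c₁) (hc₂ : 0 < c₂)
    (hq₁ : 2 < q₁) (hq₂₁ : 1 < q₂) (hq₂₂ : q₂ < 2)
    (hα₁ : α₁ = (q₁ - 2) / (q₁ - 1)) (hα₂ : α₂ = (q₂ - 2) / (q₂ - 1))
    (h : EuclideanSpace ℝ (Fin p) → ℝ) (hsmooth : ContDiff ℝ 2 h)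
    (xstar : EuclideanSpace ℝ (Fin p))
    (hcrit : ∀ x : EuclideanSpace ℝ (Fin p), gradient h x = 0 ↔ x = xstar)
    (Hstar : Matrix (Fin p) (Fin p) ℝ) (hHsymm : Hstar.IsSymm) (hHpd : Hstar.PosDef)
    (αh : ℝ) (hαh : 0 < αh)
    (hHlb : ∀ w : EuclideanSpace ℝ (Fin p), αh * ‖w‖ ^ 2 ≤ ⟪w, mulVecE Hstar w⟫_ℝ)
    (hhess : ∀ x : EuclideanSpace ℝ (Fin p), HasFDerivAt (gradient h) (mulVecCLM Hstar) x) :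
    ∀ k > (0 : ℝ), ∃ Kstar > (0 : ℝ), ∀ K > Kstar,
      -- (i) the constant function (x*, 0) is a solution
      IsTargetSol c₁ c₂ α₁ α₂ k K h Hstar (fun _ => xstar) (fun _ => 0) ∧
      -- (ii) Lyapunov stability
      (∀ ε > (0 : ℝ), ∃ δ > (0 : ℝ), ∀ x v : ℝ → EuclideanSpace ℝ (Fin p),
        IsTargetSol c₁ c₂ α₁ α₂ k K h Hstar x v →
        ‖x 0 - xstar‖ ^ 2 + ‖v 0‖ ^ 2 < δ ^ 2 →
        ∀ t : ℝ, 0 ≤ t → ‖x t - xstar‖ ^ 2 + ‖v t‖ ^ 2 < ε ^ 2) ∧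
      -- (iii) finite-time convergence of every solution
      (∀ x v : ℝ → EuclideanSpace ℝ (Fin p),
        IsTargetSol c₁ c₂ α₁ α₂ k K h Hstar x v →
        ∃ T₀ : ℝ, 0 ≤ T₀ ∧ ∀ t : ℝ, T₀ ≤ t → x t = xstar ∧ v t = 0) :=
  stmt0_general p c₁ c₂ q₁ q₂ α₁ α₂ hc₁ hc₂ hq₁ hq₂₁ hα₁ hα₂ h xstar hcrit Hstar hHsymm αh hαh hHlb
    hhess
end

section
/- Let H be an n×n real symmetric positive definite matrix, let α ∈ (0,1), and let k₁ > 0. Then for all z, g ∈ ℝⁿ with z ≠ g, zᵀ(z − g) / ‖H⁻¹(z − g)‖^{α} ≤ (k₁/(2−α)) · λ_max(H)^{2−α} · ‖z‖^{2−α} + ((1−α)/(2−α)) · k₁^{−1/(1−α)} · λ_min(H)^{α−2} · ‖z − g‖^{2−α}. -/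
open scoped InnerProductSpace

/-!
Write `u = z - g`. By Cauchy–Schwarz and `‖u‖ ≤ λ_max ‖H⁻¹ u‖`, the left side is at most
`(λ_max ‖z‖) · (‖u‖ / λ_max) ^ (1 - α)`. Weighted AM–GM with weights `1/(2-α)` and `(1-α)/(2-α)`
(Young's inequality with exponents `2 - α` and `(2 - α)/(1 - α)`), with `k₁` moved between the
factors, bounds this product by the two terms of the right side, up to replacing `λ_min ^ (α - 2)`
by the smaller `λ_max ^ (α - 2)`.
-/

namespace Matrix.IsHermitian

variable {ι : Type*} [Fintype ι] [DecidableEq ι] {H : Matrix ι ι ℝ}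

lemma toEuclideanLin_eigenvectorBasis (hH : H.IsHermitian) (i : ι) :
    toEuclideanLin H (hH.eigenvectorBasis i) = hH.eigenvalues i • hH.eigenvectorBasis i :=
  PiLp.ext fun j => congrFun (hH.mulVec_eigenvectorBasis i) j

lemma repr_toEuclideanLin (hH : H.IsHermitian) (v : EuclideanSpace ℝ ι) (i : ι) :
    hH.eigenvectorBasis.repr (toEuclideanLin H v) i =
      hH.eigenvalues i * hH.eigenvectorBasis.repr v i := by
  rw [OrthonormalBasis.repr_apply_apply, OrthonormalBasis.repr_apply_apply,
    ← isSymmetric_toEuclideanLin_iff.mpr hH, toEuclideanLin_eigenvectorBasis, real_inner_smul_left]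

lemma norm_toEuclideanLin_le (hH : H.IsHermitian) {c : ℝ} (hc0 : 0 ≤ c)
    (hc : ∀ i, |hH.eigenvalues i| ≤ c) (v : EuclideanSpace ℝ ι) :
    ‖toEuclideanLin H v‖ ≤ c * ‖v‖ := by
  set b := hH.eigenvectorBasis
  refine (pow_le_pow_iff_left₀ (norm_nonneg _) (by positivity) two_ne_zero).mp ?_
  rw [← b.repr.norm_map, ← b.repr.norm_map v, mul_pow, EuclideanSpace.norm_sq_eq,
    EuclideanSpace.norm_sq_eq, Finset.mul_sum]
  gcongr with i
  rw [repr_toEuclideanLin, norm_mul, mul_pow, Real.norm_eq_abs]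
  gcongr
  exact hc i

lemma norm_le_mul_norm_toEuclideanLin_inv (hH : H.IsHermitian) (hdet : IsUnit H.det) {c : ℝ}
    (hc0 : 0 ≤ c) (hc : ∀ i, |hH.eigenvalues i| ≤ c) (u : EuclideanSpace ℝ ι) :
    ‖u‖ ≤ c * ‖toEuclideanLin H⁻¹ u‖ := by
  have hu : toEuclideanLin H (toEuclideanLin H⁻¹ u) = u := by
    rw [← LinearMap.comp_apply, ← toLpLin_mul_same, mul_nonsing_inv H hdet, toLpLin_one,
      LinearMap.id_apply]
  conv_lhs => rw [← hu]
  exact hH.norm_toEuclideanLin_le hc0 hc _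

end Matrix.IsHermitian

lemma real_inner_div_rpow_le {E : Type*} [NormedAddCommGroup E] [InnerProductSpace ℝ E]
    {z u : E} {c D α : ℝ} (hc : 0 < c) (hα : 0 ≤ α) (hD : ‖u‖ ≤ c * D) :
    ⟪z, u⟫_ℝ / D ^ α ≤ c * ‖z‖ * (‖u‖ / c) ^ (1 - α) := by
  rcases eq_or_ne u 0 with rfl | hu
  · simp only [inner_zero_right, zero_div, norm_zero]
    positivity
  have hy : 0 < ‖u‖ / c := div_pos (norm_pos_iff.mpr hu) hc
  have hyD : ‖u‖ / c ≤ D := (div_le_iff₀' hc).mpr hD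
  calc ⟪z, u⟫_ℝ / D ^ α ≤ ‖z‖ * ‖u‖ / (‖u‖ / c) ^ α := by
        gcongr
        exact real_inner_le_norm z u
    _ = c * ‖z‖ * (‖u‖ / c) ^ (1 - α) := by
        rw [Real.rpow_sub hy, Real.rpow_one]
        field_simp

lemma mul_rpow_one_sub_le_weighted_young {x y k α : ℝ} (hx : 0 ≤ x) (hy : 0 ≤ y) (hk : 0 < k)
    (hα : α < 1) :
    x * y ^ (1 - α) ≤
      k / (2 - α) * x ^ (2 - α) + (1 - α) / (2 - α) * k ^ (-(1 / (1 - α))) * y ^ (2 - α) := by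
  have h2α : 0 < 2 - α := by linarith
  have h1α : 0 < 1 - α := by linarith
  have hweights : 1 / (2 - α) + (1 - α) / (2 - α) = 1 := by field_simp; ring
  have hamgm := Real.geom_mean_le_arith_mean2_weighted (by positivity) (by positivity)
    (by positivity : 0 ≤ k * x ^ (2 - α)) (by positivity : 0 ≤ k ^ (-(1 / (1 - α))) * y ^ (2 - α))
    hweights
  have hgeom : (k * x ^ (2 - α)) ^ (1 / (2 - α)) *
      (k ^ (-(1 / (1 - α))) * y ^ (2 - α)) ^ ((1 - α) / (2 - α)) = x * y ^ (1 - α) := by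
    rw [Real.mul_rpow hk.le (by positivity), Real.mul_rpow (by positivity) (by positivity),
      ← Real.rpow_mul hx, ← Real.rpow_mul hk.le, ← Real.rpow_mul hy,
      show (2 - α) * (1 / (2 - α)) = 1 by field_simp,
      show -(1 / (1 - α)) * ((1 - α) / (2 - α)) = -(1 / (2 - α)) by field_simp,
      show (2 - α) * ((1 - α) / (2 - α)) = 1 - α by field_simp, Real.rpow_one,
      Real.rpow_neg hk.le]
    field_simp
  rw [hgeom] at hamgm
  exact hamgm.trans_eq (by ring)

theorem stmt6_general (n : ℕ) (H : Matrix (Fin n) (Fin n) ℝ) (hH : H.PosDef)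
    (lammin lammax : ℝ)
    (hminmem : ∃ i, hH.1.eigenvalues i = lammin)
    (hmax : ∀ i, hH.1.eigenvalues i ≤ lammax)
    (α : ℝ) (hα0 : 0 < α) (hα1 : α < 1) (k₁ : ℝ) (hk₁ : 0 < k₁)
    (z g : EuclideanSpace ℝ (Fin n)) :
    ⟪z, z - g⟫_ℝ / ‖mulVecE H⁻¹ (z - g)‖ ^ α ≤
      k₁ / (2 - α) * lammax ^ (2 - α) * ‖z‖ ^ (2 - α) +
        (1 - α) / (2 - α) * k₁ ^ (-(1 / (1 - α))) * lammin ^ (α - 2) * ‖z - g‖ ^ (2 - α) := by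
  have h2α : 0 < 2 - α := by linarith
  obtain ⟨i₀, hi₀⟩ := hminmem
  have hmin_pos : 0 < lammin := hi₀ ▸ hH.eigenvalues_pos i₀
  have hmin_le_max : lammin ≤ lammax := hi₀ ▸ hmax i₀
  have hmax_pos : 0 < lammax := hmin_pos.trans_le hmin_le_max
  have habs : ∀ i, |hH.1.eigenvalues i| ≤ lammax :=
    fun i => (abs_of_pos (hH.eigenvalues_pos i)).trans_le (hmax i)
  have hinv : ‖z - g‖ ≤ lammax * ‖mulVecE H⁻¹ (z - g)‖ :=
    hH.1.norm_le_mul_norm_toEuclideanLin_inv (isUnit_iff_ne_zero.mpr hH.det_pos.ne')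
      hmax_pos.le habs _
  have hshrink : (‖z - g‖ / lammax) ^ (2 - α) ≤ lammin ^ (α - 2) * ‖z - g‖ ^ (2 - α) := by
    rw [Real.div_rpow (norm_nonneg _) hmax_pos.le, show α - 2 = -(2 - α) by ring,
      Real.rpow_neg hmin_pos.le, inv_mul_eq_div]
    gcongr
  calc ⟪z, z - g⟫_ℝ / ‖mulVecE H⁻¹ (z - g)‖ ^ α
      ≤ lammax * ‖z‖ * (‖z - g‖ / lammax) ^ (1 - α) :=
        real_inner_div_rpow_le hmax_pos hα0.le hinv
    _ ≤ k₁ / (2 - α) * (lammax * ‖z‖) ^ (2 - α) +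
          (1 - α) / (2 - α) * k₁ ^ (-(1 / (1 - α))) * (‖z - g‖ / lammax) ^ (2 - α) :=
        mul_rpow_one_sub_le_weighted_young (by positivity) (by positivity) hk₁ hα1
    _ ≤ _ := by
        rw [Real.mul_rpow hmax_pos.le (norm_nonneg z), ← mul_assoc, mul_assoc _ (lammin ^ _)]
        gcongr

theorem stmt6 (n : ℕ) (H : Matrix (Fin n) (Fin n) ℝ) (hH : H.PosDef)
    (lammin lammax : ℝ)
    (hminmem : ∃ i, hH.1.eigenvalues i = lammin)
    (hmin : ∀ i, lammin ≤ hH.1.eigenvalues i)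
    (hmaxmem : ∃ i, hH.1.eigenvalues i = lammax)
    (hmax : ∀ i, hH.1.eigenvalues i ≤ lammax)
    (α : ℝ) (hα0 : 0 < α) (hα1 : α < 1) (k₁ : ℝ) (hk₁ : 0 < k₁)
    (z g : EuclideanSpace ℝ (Fin n)) (hzg : z ≠ g) :
    ⟪z, z - g⟫_ℝ / ‖mulVecE H⁻¹ (z - g)‖ ^ α ≤
      k₁ / (2 - α) * lammax ^ (2 - α) * ‖z‖ ^ (2 - α) +
        (1 - α) / (2 - α) * k₁ ^ (-(1 / (1 - α))) * lammin ^ (α - 2) * ‖z - g‖ ^ (2 - α) :=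
  stmt6_general n H hH lammin lammax hminmem hmax α hα0 hα1 k₁ hk₁ z g
end

section
/- Let H be an n×n real symmetric positive definite matrix and let k > 0. Then there exists K* > 0 such that for every K > K* there exist positive constants k₃, k₄, k₅, k₆ with the following property: for all z, g ∈ ℝⁿ with z ≠ 0 and z ≠ g, −K·γ(z)·zᵀHz − k·γ(H⁻¹(z−g))·‖z−g‖² + 2k·γ(H⁻¹(z−g))·zᵀ(z−g) ≤ −k₃·‖z‖^{2−α₁} − k₅·‖z‖^{2−α₂} − k₄·‖z−g‖^{2−α₁} − k₆·‖z−g‖^{2−α₂}. -/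
/-!
Both `γ` and the left-hand side are sums over the two power terms, so it suffices to treat
`γ(w) = c‖w‖^{-α}` for a single `α < 1`. Write `S = ‖z‖` and `R = ‖z - g‖`. Coercivity
`zᵀHz ≥ μS²` bounds the first term by `-KcμS^{2-α}`. Since `‖H⁻¹(z - g)‖` is comparable to `R`,
`γ(H⁻¹(z - g))` is comparable to `R^{-α}`, so the damping term is at most `-kpR^{2-α}` and the
cross term at most `2kPR^{1-α}S`. Young's inequality with the conjugate exponents `(2-α)/(1-α)`
and `2-α` splits the latter into half of the damping plus `CS^{2-α}`, which a large gain `K`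
absorbs.
-/

open scoped InnerProductSpace

section Young

variable {α : ℝ}

theorem Real.rpow_one_sub_mul_le_rpow_two_sub_add (hα : α < 1) {a b : ℝ} (ha : 0 ≤ a)
    (hb : 0 ≤ b) : a ^ (1 - α) * b ≤ a ^ (2 - α) + b ^ (2 - α) := by
  have hsucc : ∀ x : ℝ, 0 ≤ x → x ^ (2 - α) = x ^ (1 - α) * x := fun x hx => by
    rw [show 2 - α = (1 - α) + 1 by ring, Real.rpow_add_one' hx (by linarith)]
  rcases le_total a b with hab | hba
  · have : a ^ (1 - α) * b ≤ b ^ (2 - α) := by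
      rw [hsucc b hb]
      exact mul_le_mul_of_nonneg_right (Real.rpow_le_rpow ha hab (by linarith)) hb
    linarith [Real.rpow_nonneg ha (2 - α)]
  · have : a ^ (1 - α) * b ≤ a ^ (2 - α) := by
      rw [hsucc a ha]
      exact mul_le_mul_of_nonneg_left hba (Real.rpow_nonneg ha _)
    linarith [Real.rpow_nonneg hb (2 - α)]

theorem Real.exists_rpow_one_sub_mul_le (hα : α < 1) {ε : ℝ} (hε : 0 < ε) :
    ∃ C > 0, ∀ a b : ℝ, 0 ≤ a → 0 ≤ b →
      a ^ (1 - α) * b ≤ ε * a ^ (2 - α) + C * b ^ (2 - α) := by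
  set t := ε ^ (2 - α)⁻¹
  have ht : 0 < t := Real.rpow_pos_of_pos hε _
  have hts : 0 < t ^ (1 - α) := Real.rpow_pos_of_pos ht _
  refine ⟨(t ^ (1 - α))⁻¹ ^ (2 - α), by positivity, fun a b ha hb => ?_⟩
  have key := Real.rpow_one_sub_mul_le_rpow_two_sub_add hα (mul_nonneg ht.le ha)
    (mul_nonneg (inv_nonneg.2 hts.le) hb)
  have hlhs : (t * a) ^ (1 - α) * ((t ^ (1 - α))⁻¹ * b) = a ^ (1 - α) * b := by
    rw [Real.mul_rpow ht.le ha]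
    field_simp
  rwa [hlhs, Real.mul_rpow ht.le ha, Real.rpow_inv_rpow hε.le (by linarith),
    Real.mul_rpow (inv_nonneg.2 hts.le) hb] at key

end Young

theorem exists_rpow_bounds_of_mul_le_of_le_mul {m M : ℝ} (hm : 0 < m) (hM : 0 < M) (β : ℝ) :
    ∃ p > 0, ∃ P > 0, ∀ R V : ℝ, 0 < R → m * R ≤ V → V ≤ M * R →
      p * R ^ β ≤ V ^ β ∧ V ^ β ≤ P * R ^ β := by
  rcases le_total 0 β with hβ | hβ
  · refine ⟨m ^ β, Real.rpow_pos_of_pos hm _, M ^ β, Real.rpow_pos_of_pos hM _,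
      fun R V hR hmV hVM => ?_⟩
    rw [← Real.mul_rpow hm.le hR.le, ← Real.mul_rpow hM.le hR.le]
    exact ⟨Real.rpow_le_rpow (mul_pos hm hR).le hmV hβ,
      Real.rpow_le_rpow ((mul_pos hm hR).le.trans hmV) hVM hβ⟩
  · refine ⟨M ^ β, Real.rpow_pos_of_pos hM _, m ^ β, Real.rpow_pos_of_pos hm _,
      fun R V hR hmV hVM => ?_⟩
    rw [← Real.mul_rpow hm.le hR.le, ← Real.mul_rpow hM.le hR.le]
    exact ⟨Real.rpow_le_rpow_of_nonpos ((mul_pos hm hR).trans_le hmV) hVM hβ,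
      Real.rpow_le_rpow_of_nonpos (mul_pos hm hR) hmV hβ⟩

theorem exists_gain_le_neg_rpow {α k μ p P : ℝ} (hα : α < 1) (hk : 0 < k) (hμ : 0 < μ) (hp : 0 < p)
    (hP : 0 < P) :
    ∃ Kstar > 0, ∀ K > Kstar, ∃ a > 0, ∃ b > 0, ∀ S R ρ q x : ℝ, 0 < S → 0 < R →
      p * R ^ (-α) ≤ ρ → ρ ≤ P * R ^ (-α) → μ * S ^ 2 ≤ q → x ≤ S * R →
        -K * S ^ (-α) * q - k * ρ * R ^ 2 + 2 * k * ρ * x ≤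
          -a * S ^ (2 - α) - b * R ^ (2 - α) := by
  obtain ⟨C, hC, young⟩ := Real.exists_rpow_one_sub_mul_le hα (ε := p / (4 * P)) (by positivity)
  refine ⟨2 * k * P * C / μ, by positivity, fun K hK => ?_⟩
  have hKμ : 2 * k * P * C < K * μ := (div_lt_iff₀ hμ).1 hK
  refine ⟨K * μ - 2 * k * P * C, by linarith, k * p / 2, by positivity,
    fun S R ρ q x hS hR hpρ hρP hq hx => ?_⟩
  have hsq : ∀ y : ℝ, 0 < y → y ^ (-α) * y ^ 2 = y ^ (2 - α) := fun y hy => by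
    rw [← Real.rpow_natCast, ← Real.rpow_add hy]; congr 1; push_cast; ring
  have hone : R ^ (-α) * R = R ^ (1 - α) := by
    rw [← Real.rpow_add_one hR.ne']; congr 1; ring
  have hK0 : 0 < K := hK.trans' (by positivity)
  have hKS : 0 ≤ K * S ^ (-α) := by positivity
  have hρ : 0 ≤ ρ := hpρ.trans' (by positivity)
  have drive : -K * S ^ (-α) * q ≤ -(K * μ) * S ^ (2 - α) := by
    rw [← hsq S hS]
    nlinarith [mul_le_mul_of_nonneg_left hq hKS]
  have damping : -k * ρ * R ^ 2 ≤ -(k * p) * R ^ (2 - α) := by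
    rw [← hsq R hR]
    nlinarith [mul_le_mul_of_nonneg_right hpρ (sq_nonneg R)]
  have cross : 2 * k * ρ * x ≤ k * p / 2 * R ^ (2 - α) + 2 * k * P * C * S ^ (2 - α) := by
    calc 2 * k * ρ * x ≤ 2 * k * ρ * (S * R) := by gcongr
      _ ≤ 2 * k * (P * R ^ (-α)) * (S * R) := by gcongr
      _ = 2 * k * P * (R ^ (1 - α) * S) := by rw [← hone]; ring
      _ ≤ 2 * k * P * (p / (4 * P) * R ^ (2 - α) + C * S ^ (2 - α)) := by
          gcongr; exact young R S hR.le hS.le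
      _ = _ := by field_simp; ring
  linarith

theorem LinearMap.exists_pos_mul_norm_sq_le_inner {E : Type*} [NormedAddCommGroup E]
    [InnerProductSpace ℝ E] [FiniteDimensional ℝ E] (T : E →ₗ[ℝ] E)
    (hT : ∀ x, x ≠ 0 → 0 < ⟪x, T x⟫_ℝ) : ∃ μ > 0, ∀ x, μ * ‖x‖ ^ 2 ≤ ⟪x, T x⟫_ℝ := by
  rcases subsingleton_or_nontrivial E with hE | hE
  · exact ⟨1, one_pos, fun x => by simp [Subsingleton.elim x 0]⟩
  have hcont : Continuous fun x => ⟪x, T x⟫_ℝ :=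
    continuous_id.inner T.continuous_of_finiteDimensional
  obtain ⟨x₀, hx₀, hmin⟩ := (isCompact_sphere (0 : E) 1).exists_isMinOn
    (NormedSpace.sphere_nonempty.2 zero_le_one) hcont.continuousOn
  refine ⟨_, hT x₀ (ne_zero_of_mem_unit_sphere ⟨x₀, hx₀⟩), fun x => ?_⟩
  rcases eq_or_ne x 0 with rfl | hx
  · simp
  have hx' : 0 < ‖x‖ := norm_pos_iff.2 hx
  have hu : ‖x‖⁻¹ • x ∈ Metric.sphere (0 : E) 1 := by
    simp [norm_smul, hx'.ne']
  have hle : ⟪x₀, T x₀⟫_ℝ ≤ ‖x‖⁻¹ * (‖x‖⁻¹ * ⟪x, T x⟫_ℝ) := by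
    simpa [real_inner_smul_left, real_inner_smul_right] using hmin hu
  calc ⟪x₀, T x₀⟫_ℝ * ‖x‖ ^ 2 ≤ ‖x‖⁻¹ * (‖x‖⁻¹ * ⟪x, T x⟫_ℝ) * ‖x‖ ^ 2 := by gcongr
    _ = ⟪x, T x⟫_ℝ := by field_simp

section mulVecE

variable {n : ℕ}

theorem mulVecE_eq_toEuclideanLin (A : Matrix (Fin n) (Fin n) ℝ) :
    mulVecE A = Matrix.toEuclideanLin A :=
  rfl

theorem Matrix.PosDef.exists_pos_mul_norm_sq_le_inner_mulVecE {H : Matrix (Fin n) (Fin n) ℝ}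
    (hH : H.PosDef) : ∃ μ > 0, ∀ z, μ * ‖z‖ ^ 2 ≤ ⟪z, mulVecE H z⟫_ℝ := by
  rw [mulVecE_eq_toEuclideanLin]
  refine (Matrix.toEuclideanLin H).exists_pos_mul_norm_sq_le_inner fun z hz => ?_
  have := hH.dotProduct_mulVec_pos (x := z.ofLp) (by simpa using hz)
  simpa [EuclideanSpace.inner_eq_star_dotProduct, dotProduct_comm] using this

theorem exists_norm_mulVecE_le (A : Matrix (Fin n) (Fin n) ℝ) :
    ∃ M > 0, ∀ w, ‖mulVecE A w‖ ≤ M * ‖w‖ :=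
  (LinearMap.toContinuousLinearMap (Matrix.toEuclideanLin A)).bound

theorem exists_mul_norm_le_norm_mulVecE {A : Matrix (Fin n) (Fin n) ℝ} (hA : IsUnit A.det) :
    ∃ m > 0, ∀ w, m * ‖w‖ ≤ ‖mulVecE A w‖ := by
  obtain ⟨M, hM, hbound⟩ := exists_norm_mulVecE_le A⁻¹
  refine ⟨M⁻¹, inv_pos.2 hM, fun w => ?_⟩
  have hinv : mulVecE A⁻¹ (mulVecE A w) = w := by
    change WithLp.toLp 2 (A⁻¹.mulVec (A.mulVec w.ofLp)) = w
    simp [Matrix.mulVec_mulVec, Matrix.nonsing_inv_mul A hA]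
  rw [inv_mul_le_iff₀ hM]
  simpa [hinv] using hbound (mulVecE A w)

end mulVecE

theorem Matrix.PosDef.exists_gain_le_neg_rpow_norm {n : ℕ} {H : Matrix (Fin n) (Fin n) ℝ}
    (hH : H.PosDef) {α c k : ℝ} (hα : α < 1) (hc : 0 < c) (hk : 0 < k) :
    ∃ Kstar > 0, ∀ K > Kstar, ∃ a > 0, ∃ b > 0,
      ∀ z g : EuclideanSpace ℝ (Fin n), z ≠ 0 → z ≠ g →
        -K * (c * ‖z‖ ^ (-α)) * ⟪z, mulVecE H z⟫_ℝ
            - k * (c * ‖mulVecE H⁻¹ (z - g)‖ ^ (-α)) * ‖z - g‖ ^ 2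
            + 2 * k * (c * ‖mulVecE H⁻¹ (z - g)‖ ^ (-α)) * ⟪z, z - g⟫_ℝ ≤
          -a * ‖z‖ ^ (2 - α) - b * ‖z - g‖ ^ (2 - α) := by
  obtain ⟨μ, hμ, hcoer⟩ := hH.exists_pos_mul_norm_sq_le_inner_mulVecE
  have hdet : IsUnit H⁻¹.det :=
    H.isUnit_nonsing_inv_det ((H.isUnit_iff_isUnit_det).1 hH.isUnit)
  obtain ⟨m, hm, hlow⟩ := exists_mul_norm_le_norm_mulVecE hdet
  obtain ⟨M, hM, hup⟩ := exists_norm_mulVecE_le H⁻¹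
  obtain ⟨p, hp, P, hP, hsandwich⟩ := exists_rpow_bounds_of_mul_le_of_le_mul hm hM (-α)
  obtain ⟨Kstar, hKstar, hgain⟩ := exists_gain_le_neg_rpow hα hk (mul_pos hc hμ) (mul_pos hc hp)
    (mul_pos hc hP)
  refine ⟨Kstar, hKstar, fun K hK => ?_⟩
  obtain ⟨a, ha, b, hb, hest⟩ := hgain K hK
  refine ⟨a, ha, b, hb, fun z g hz hzg => ?_⟩
  have hR : 0 < ‖z - g‖ := norm_pos_iff.2 (sub_ne_zero.2 hzg)
  obtain ⟨hpV, hVP⟩ := hsandwich _ _ hR (hlow (z - g)) (hup (z - g))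
  have := hest ‖z‖ ‖z - g‖ (c * ‖mulVecE H⁻¹ (z - g)‖ ^ (-α)) (c * ⟪z, mulVecE H z⟫_ℝ)
    ⟪z, z - g⟫_ℝ (norm_pos_iff.2 hz) hR
    (by rw [mul_assoc]; exact mul_le_mul_of_nonneg_left hpV hc.le)
    (by rw [mul_assoc]; exact mul_le_mul_of_nonneg_left hVP hc.le)
    (by rw [mul_assoc]; exact mul_le_mul_of_nonneg_left (hcoer z) hc.le)
    (real_inner_le_norm z (z - g))
  linear_combination this

theorem stmt8_general (n : ℕ) (c₁ c₂ q₁ q₂ α₁ α₂ : ℝ)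
    (hc₁ : 0 < c₁) (hc₂ : 0 < c₂)
    (hq₁ : 2 < q₁) (hq₂₁ : 1 < q₂)
    (hα₁ : α₁ = (q₁ - 2) / (q₁ - 1)) (hα₂ : α₂ = (q₂ - 2) / (q₂ - 1))
    (H : Matrix (Fin n) (Fin n) ℝ) (hH : H.PosDef)
    (k : ℝ) (hk : 0 < k) :
    ∃ Kstar > (0 : ℝ), ∀ K > Kstar,
      ∃ k₃ > (0 : ℝ), ∃ k₄ > (0 : ℝ), ∃ k₅ > (0 : ℝ), ∃ k₆ > (0 : ℝ),
        ∀ z g : EuclideanSpace ℝ (Fin n), z ≠ 0 → z ≠ g →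
          -K * gammaFun c₁ c₂ α₁ α₂ z * ⟪z, mulVecE H z⟫_ℝ
              - k * gammaFun c₁ c₂ α₁ α₂ (mulVecE H⁻¹ (z - g)) * ‖z - g‖ ^ 2
              + 2 * k * gammaFun c₁ c₂ α₁ α₂ (mulVecE H⁻¹ (z - g)) * ⟪z, z - g⟫_ℝ ≤
            -k₃ * ‖z‖ ^ (2 - α₁) - k₅ * ‖z‖ ^ (2 - α₂)
              - k₄ * ‖z - g‖ ^ (2 - α₁) - k₆ * ‖z - g‖ ^ (2 - α₂) := by
  have hα₁1 : α₁ < 1 := by rw [hα₁, div_lt_one (by linarith)]; linarith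
  have hα₂1 : α₂ < 1 := by rw [hα₂, div_lt_one (by linarith)]; linarith
  obtain ⟨K₁, hK₁, hgain₁⟩ := hH.exists_gain_le_neg_rpow_norm hα₁1 hc₁ hk
  obtain ⟨K₂, hK₂, hgain₂⟩ := hH.exists_gain_le_neg_rpow_norm hα₂1 hc₂ hk
  refine ⟨max K₁ K₂, lt_max_of_lt_left hK₁, fun K hK => ?_⟩
  obtain ⟨k₃, hk₃, k₄, hk₄, hest₁⟩ := hgain₁ K (max_lt_iff.1 hK).1
  obtain ⟨k₅, hk₅, k₆, hk₆, hest₂⟩ := hgain₂ K (max_lt_iff.1 hK).2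
  refine ⟨k₃, hk₃, k₄, hk₄, k₅, hk₅, k₆, hk₆, fun z g hz hzg => ?_⟩
  unfold gammaFun
  linear_combination hest₁ z g hz hzg + hest₂ z g hz hzg

theorem stmt8 (n : ℕ) (c₁ c₂ q₁ q₂ α₁ α₂ : ℝ)
    (hc₁ : 0 < c₁) (hc₂ : 0 < c₂)
    (hq₁ : 2 < q₁) (hq₂₁ : 1 < q₂) (hq₂₂ : q₂ < 2)
    (hα₁ : α₁ = (q₁ - 2) / (q₁ - 1)) (hα₂ : α₂ = (q₂ - 2) / (q₂ - 1))
    (H : Matrix (Fin n) (Fin n) ℝ) (hH : H.PosDef) (hHsymm : H.IsSymm)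
    (k : ℝ) (hk : 0 < k) :
    ∃ Kstar > (0 : ℝ), ∀ K > Kstar,
      ∃ k₃ > (0 : ℝ), ∃ k₄ > (0 : ℝ), ∃ k₅ > (0 : ℝ), ∃ k₆ > (0 : ℝ),
        ∀ z g : EuclideanSpace ℝ (Fin n), z ≠ 0 → z ≠ g →
          -K * gammaFun c₁ c₂ α₁ α₂ z * ⟪z, mulVecE H z⟫_ℝ
              - k * gammaFun c₁ c₂ α₁ α₂ (mulVecE H⁻¹ (z - g)) * ‖z - g‖ ^ 2
              + 2 * k * gammaFun c₁ c₂ α₁ α₂ (mulVecE H⁻¹ (z - g)) * ⟪z, z - g⟫_ℝ ≤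
            -k₃ * ‖z‖ ^ (2 - α₁) - k₅ * ‖z‖ ^ (2 - α₂)
              - k₄ * ‖z - g‖ ^ (2 - α₁) - k₆ * ‖z - g‖ ^ (2 - α₂) :=
  stmt8_general n c₁ c₂ q₁ q₂ α₁ α₂ hc₁ hc₂ hq₁ hq₂₁ hα₁ hα₂ H hH k hk
end

section
/- Let H be an n×n real symmetric positive definite matrix and let k > 0. Then there exists K* > 0 such that for every K > K* there exists a constant c > 0 with the following property: for all z, g ∈ ℝⁿ with z ≠ 0 and z ≠ g, −K·γ(z)·zᵀHz − k·γ(H⁻¹(z−g))·‖z−g‖² + 2k·γ(H⁻¹(z−g))·zᵀ(z−g) ≤ −c·(‖z‖² + ‖g‖²)^{(2−α₁)/2}. (This is the key Lyapunov decay estimate for V₁ = (‖z‖² + ‖g‖²)/2 in the target finite-time Newton-seeking system.) -/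
/-!
Write `N = ‖z‖`, `G = ‖g‖`, `S = ‖z - g‖` and `u = H⁻¹(z - g)`. The identity
`2⟪z, z - g⟫ - S² = N² - G²` turns the left side into `-K γ(z) ⟪z, Hz⟫ + k γ(u) (N² - G²)`,
and `‖u‖` is comparable to `S` up to the operator norms of `H` and `H⁻¹`.

If `G ≤ 2N`, then `S ≤ 3N`; since `t ↦ t γ(t)` is increasing and `γ` changes by at most a
bounded factor under bounded rescaling, the cross term is at most a constant times `N² γ(N)`.
Coercivity of `H` gives `⟪z, Hz⟫ ≥ m N²`, so for `K` large the first term absorbs it, leaving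
at most `-const · c₁ N^{2-α₁}`. If `G > 2N`, the cross term is itself negative: `N² - G² ≤ -¾ G²`
and `‖u‖ ≲ G` give `γ(u) ≳ G^{-α₁}`, hence a bound `-const · G^{2-α₁}`. In both cases `N² + G²`
is comparable to the square of the larger norm.
-/

open scoped InnerProductSpace

noncomputable def radialGamma (c₁ c₂ α₁ α₂ t : ℝ) : ℝ :=
  c₁ * t ^ (-α₁) + c₂ * t ^ (-α₂)

theorem gammaFun_eq_radialGamma {n : ℕ} (c₁ c₂ α₁ α₂ : ℝ) (w : EuclideanSpace ℝ (Fin n)) :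
    gammaFun c₁ c₂ α₁ α₂ w = radialGamma c₁ c₂ α₁ α₂ ‖w‖ :=
  rfl

theorem sq_mul_rpow_neg {x : ℝ} (hx : 0 < x) (α : ℝ) : x ^ 2 * x ^ (-α) = x ^ (2 - α) := by
  rw [sub_eq_add_neg, Real.rpow_add hx, Real.rpow_two]

theorem mul_rpow_div_two_le_of_le_mul_sq {x y a p c d : ℝ} (hx : 0 ≤ x) (hy : 0 ≤ y)
    (ha : 0 < a) (hp : 0 ≤ p) (hd : 0 ≤ d) (h : x ≤ a * y ^ 2) (hc : c ≤ d / a ^ (p / 2)) :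
    c * x ^ (p / 2) ≤ d * y ^ p :=
  calc c * x ^ (p / 2) ≤ d / a ^ (p / 2) * (a * y ^ 2) ^ (p / 2) :=
        mul_le_mul hc (Real.rpow_le_rpow hx h (by positivity)) (by positivity) (by positivity)
    _ = d * y ^ p := by
      rw [Real.mul_rpow ha.le (by positivity), ← Real.rpow_two, ← Real.rpow_mul hy,
        mul_div_cancel₀ p two_ne_zero]
      field_simp

theorem two_mul_inner_sub_sub_norm_sub_sq {E : Type*} [NormedAddCommGroup E]
    [InnerProductSpace ℝ E] (z g : E) :
    2 * ⟪z, z - g⟫_ℝ - ‖z - g‖ ^ 2 = ‖z‖ ^ 2 - ‖g‖ ^ 2 := by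
  rw [inner_sub_right, real_inner_self_eq_norm_sq, norm_sub_sq_real]
  ring

section RadialGamma

variable {c₁ c₂ α₁ α₂ : ℝ}

local notation "γ" => radialGamma c₁ c₂ α₁ α₂

theorem radialGamma_nonneg (hc₁ : 0 ≤ c₁) (hc₂ : 0 ≤ c₂) {t : ℝ} (ht : 0 ≤ t) : 0 ≤ γ t := by
  unfold radialGamma
  positivity

theorem mul_rpow_neg_le_radialGamma (hc₂ : 0 ≤ c₂) {t : ℝ} (ht : 0 ≤ t) :
    c₁ * t ^ (-α₁) ≤ γ t :=
  le_add_of_nonneg_right (by positivity)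

theorem mul_rpow_le_sq_mul_radialGamma (hc₂ : 0 ≤ c₂) {t : ℝ} (ht : 0 < t) :
    c₁ * t ^ (2 - α₁) ≤ t ^ 2 * γ t := by
  rw [← sq_mul_rpow_neg ht, mul_left_comm]
  exact mul_le_mul_of_nonneg_left (mul_rpow_neg_le_radialGamma hc₂ ht.le) (by positivity)

theorem mul_radialGamma {t : ℝ} (ht : 0 < t) :
    t * γ t = c₁ * t ^ (1 - α₁) + c₂ * t ^ (1 - α₂) := by
  simp only [radialGamma, sub_eq_add_neg _ α₁, sub_eq_add_neg _ α₂, Real.rpow_add ht,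
    Real.rpow_one]
  ring

theorem mul_radialGamma_le_mul_radialGamma (hc₁ : 0 ≤ c₁) (hc₂ : 0 ≤ c₂) (hα₁ : α₁ ≤ 1)
    (hα₂ : α₂ ≤ 1) {s t : ℝ} (hs : 0 < s) (hst : s ≤ t) : s * γ s ≤ t * γ t := by
  rw [mul_radialGamma hs, mul_radialGamma (hs.trans_le hst)]
  gcongr

theorem radialGamma_le_rpow_mul_radialGamma (hc₁ : 0 ≤ c₁) (hc₂ : 0 ≤ c₂) (hα₁ : 0 ≤ α₁)
    (hα₂ : α₂ ≤ 0) {a s t : ℝ} (ha : 1 ≤ a) (hs : 0 < s) (ht : 0 < t) (hst : s ≤ a * t)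
    (hts : t ≤ a * s) : γ t ≤ a ^ (α₁ - α₂) * γ s := by
  have ha₀ : 0 < a := zero_lt_one.trans_le ha
  have h₁ : t ^ (-α₁) ≤ a ^ (α₁ - α₂) * s ^ (-α₁) :=
    calc t ^ (-α₁) = a ^ α₁ * (a * t) ^ (-α₁) := by
          rw [Real.mul_rpow ha₀.le ht.le, Real.rpow_neg ha₀.le, mul_inv_cancel_left₀]
          positivity
      _ ≤ a ^ (α₁ - α₂) * s ^ (-α₁) := by
          gcongr ?_ * ?_
          · exact Real.rpow_le_rpow_of_exponent_le ha (by linarith)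
          · exact Real.rpow_le_rpow_of_nonpos hs hst (by linarith)
  have h₂ : t ^ (-α₂) ≤ a ^ (α₁ - α₂) * s ^ (-α₂) :=
    calc t ^ (-α₂) ≤ (a * s) ^ (-α₂) := Real.rpow_le_rpow ht.le hts (by linarith)
      _ = a ^ (-α₂) * s ^ (-α₂) := Real.mul_rpow ha₀.le hs.le
      _ ≤ a ^ (α₁ - α₂) * s ^ (-α₂) := by
          gcongr
          linarith
  unfold radialGamma
  linarith [mul_le_mul_of_nonneg_left h₁ hc₁, mul_le_mul_of_nonneg_left h₂ hc₂]

theorem radialGamma_mul_sq_sub_sq_le_of_le_two_mul (hc₁ : 0 ≤ c₁) (hc₂ : 0 ≤ c₂)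
    (hα₁ : 0 ≤ α₁) (hα₁' : α₁ ≤ 1) (hα₂ : α₂ ≤ 0) {a N G S U : ℝ} (ha : 1 ≤ a) (hN : 0 < N)
    (hG : 0 ≤ G) (hS : 0 < S) (hU : 0 < U) (hNG : N - G ≤ S) (hSNG : S ≤ N + G)
    (hSU : S ≤ a * U) (hUS : U ≤ a * S) (hGN : G ≤ 2 * N) :
    γ U * (N ^ 2 - G ^ 2) ≤ 9 * (3 * a) ^ (α₁ - α₂) * (N ^ 2 * γ N) := by
  have h₁ : N ^ 2 - G ^ 2 ≤ 3 * N * S := by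
    nlinarith [mul_le_mul_of_nonneg_left hNG (add_nonneg hN.le hG)]
  have h₂ : S * γ S ≤ 3 * N * γ (3 * N) :=
    mul_radialGamma_le_mul_radialGamma hc₁ hc₂ hα₁' (by linarith) hS (by linarith)
  have h₃ : γ (3 * N) ≤ 3 ^ (α₁ - α₂) * γ N :=
    radialGamma_le_rpow_mul_radialGamma hc₁ hc₂ hα₁ hα₂ (by norm_num) hN (by positivity)
      (by linarith) le_rfl
  have h₄ : γ U ≤ a ^ (α₁ - α₂) * γ S :=
    radialGamma_le_rpow_mul_radialGamma hc₁ hc₂ hα₁ hα₂ ha hS hU hSU hUS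
  calc γ U * (N ^ 2 - G ^ 2) ≤ γ U * (3 * N * S) :=
        mul_le_mul_of_nonneg_left h₁ (radialGamma_nonneg hc₁ hc₂ hU.le)
    _ ≤ a ^ (α₁ - α₂) * γ S * (3 * N * S) := by gcongr
    _ = 3 * N * a ^ (α₁ - α₂) * (S * γ S) := by ring
    _ ≤ 3 * N * a ^ (α₁ - α₂) * (3 * N * γ (3 * N)) := by gcongr
    _ ≤ 3 * N * a ^ (α₁ - α₂) * (3 * N * (3 ^ (α₁ - α₂) * γ N)) := by gcongr
    _ = 9 * (3 * a) ^ (α₁ - α₂) * (N ^ 2 * γ N) := by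
        rw [Real.mul_rpow (by norm_num) (by linarith)]
        ring

theorem radialGamma_mul_sq_sub_sq_le_of_two_mul_lt (hc₁ : 0 ≤ c₁) (hc₂ : 0 ≤ c₂)
    (hα₁ : 0 ≤ α₁) {a N G S U : ℝ} (ha : 0 < a) (hN : 0 ≤ N) (hU : 0 < U) (hSNG : S ≤ N + G)
    (hUS : U ≤ a * S) (hGN : 2 * N < G) :
    γ U * (N ^ 2 - G ^ 2) ≤ -(3 / 4 * c₁ * (3 / 2 * a) ^ (-α₁)) * G ^ (2 - α₁) := by
  have hG : 0 < G := by linarith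
  have h₁ : N ^ 2 - G ^ 2 ≤ -(3 / 4) * G ^ 2 := by nlinarith
  have h₂ : U ≤ 3 / 2 * a * G :=
    hUS.trans (by nlinarith)
  have h₃ : c₁ * (3 / 2 * a * G) ^ (-α₁) ≤ γ U :=
    (mul_rpow_neg_le_radialGamma hc₂ hU.le).trans'
      (mul_le_mul_of_nonneg_left (Real.rpow_le_rpow_of_nonpos hU h₂ (by linarith)) hc₁)
  calc γ U * (N ^ 2 - G ^ 2) ≤ γ U * (-(3 / 4) * G ^ 2) :=
        mul_le_mul_of_nonneg_left h₁ (radialGamma_nonneg hc₁ hc₂ hU.le)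
    _ ≤ c₁ * (3 / 2 * a * G) ^ (-α₁) * (-(3 / 4) * G ^ 2) :=
        mul_le_mul_of_nonpos_right h₃ (by nlinarith)
    _ = -(3 / 4 * c₁ * (3 / 2 * a) ^ (-α₁)) * G ^ (2 - α₁) := by
        rw [Real.mul_rpow (by positivity) hG.le, ← sq_mul_rpow_neg hG]
        ring

theorem exists_radialGamma_decay_bound (hc₁ : 0 < c₁) (hc₂ : 0 ≤ c₂) (hα₁ : 0 ≤ α₁)
    (hα₁' : α₁ ≤ 1) (hα₂ : α₂ ≤ 0) {k m a : ℝ} (hk : 0 < k) (hm : 0 < m) (ha : 1 ≤ a) :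
    ∃ Kstar > (0 : ℝ), ∀ K > Kstar, ∃ c > (0 : ℝ), ∀ N G S U P : ℝ, 0 < N → 0 ≤ G → 0 < S →
      0 < U → N - G ≤ S → S ≤ N + G → S ≤ a * U → U ≤ a * S → m * N ^ 2 ≤ P →
        -K * γ N * P + k * γ U * (N ^ 2 - G ^ 2) ≤ -c * (N ^ 2 + G ^ 2) ^ ((2 - α₁) / 2) := by
  set C := 9 * (3 * a) ^ (α₁ - α₂)
  have hC : 0 < C := by positivity
  refine ⟨k * C / m, by positivity, fun K hK => ?_⟩
  have hKC : 0 < K * m - k * C := by rw [gt_iff_lt, div_lt_iff₀ hm] at hK; linarith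
  set E := k * (3 / 4 * c₁ * (3 / 2 * a) ^ (-α₁)) with hE_def
  have hE : 0 < E := by positivity
  set p := 2 - α₁
  have hp : 0 ≤ p := by linarith
  set c := min ((K * m - k * C) * c₁ / 5 ^ (p / 2)) (E / 2 ^ (p / 2))
  refine ⟨c, by positivity, ?_⟩
  intro N G S U P hN hG hS hU hNG hSNG hSU hUS hP
  have hγN : 0 ≤ γ N := radialGamma_nonneg hc₁.le hc₂ hN.le
  have hK₀ : 0 < K := (by positivity : 0 < k * C / m).trans hK
  have hKP : K * γ N * (m * N ^ 2) ≤ K * γ N * P := by gcongr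
  rcases le_or_gt G (2 * N) with hGN | hGN
  · have hnear := radialGamma_mul_sq_sub_sq_le_of_le_two_mul hc₁.le hc₂ hα₁ hα₁' hα₂ ha hN hG hS
      hU hNG hSNG hSU hUS hGN
    have hlow : c₁ * N ^ p ≤ N ^ 2 * γ N := mul_rpow_le_sq_mul_radialGamma hc₂ hN
    have hc : c * (N ^ 2 + G ^ 2) ^ (p / 2) ≤ (K * m - k * C) * c₁ * N ^ p :=
      mul_rpow_div_two_le_of_le_mul_sq (by positivity) hN.le (by norm_num) hp (by positivity)
        (by nlinarith) (min_le_left _ _)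
    linarith [mul_le_mul_of_nonneg_left hnear hk.le, mul_le_mul_of_nonneg_left hlow hKC.le]
  · have hfar : k * γ U * (N ^ 2 - G ^ 2) ≤ -E * G ^ p := by
      have h : γ U * (N ^ 2 - G ^ 2) ≤ -(3 / 4 * c₁ * (3 / 2 * a) ^ (-α₁)) * G ^ p :=
        radialGamma_mul_sq_sub_sq_le_of_two_mul_lt hc₁.le hc₂ hα₁
          (zero_lt_one.trans_le ha) hN.le hU hSNG hUS hGN
      rw [hE_def]
      linarith [mul_le_mul_of_nonneg_left h hk.le]
    have hc : c * (N ^ 2 + G ^ 2) ^ (p / 2) ≤ E * G ^ p :=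
      mul_rpow_div_two_le_of_le_mul_sq (by positivity) hG (by norm_num) hp hE.le
        (by nlinarith) (min_le_right _ _)
    linarith [hKP, mul_nonneg (mul_nonneg hK₀.le hγN) (by positivity : 0 ≤ m * N ^ 2)]

end RadialGamma

section MulVecE

open Matrix MatrixOrder

variable {n : ℕ}

theorem ofLp_mulVecE (M : Matrix (Fin n) (Fin n) ℝ) (x : EuclideanSpace ℝ (Fin n)) :
    (mulVecE M x).ofLp = M *ᵥ x.ofLp :=
  rfl

theorem mulVecE_eq_toEuclideanCLM (M : Matrix (Fin n) (Fin n) ℝ) :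
    mulVecE M = toEuclideanCLM (𝕜 := ℝ) M :=
  rfl

theorem mulVecE_mulVecE_inv {M : Matrix (Fin n) (Fin n) ℝ} (hM : IsUnit M.det)
    (x : EuclideanSpace ℝ (Fin n)) : mulVecE M (mulVecE M⁻¹ x) = x := by
  ext1
  simp [ofLp_mulVecE, mul_nonsing_inv M hM]

theorem exists_bound_norm_mulVecE_and_mulVecE_inv (M : Matrix (Fin n) (Fin n) ℝ) :
    ∃ a ≥ (1 : ℝ), ∀ x, ‖mulVecE M x‖ ≤ a * ‖x‖ ∧ ‖mulVecE M⁻¹ x‖ ≤ a * ‖x‖ := by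
  set T := toEuclideanCLM (𝕜 := ℝ) (n := Fin n)
  refine ⟨max (max ‖T M‖ ‖T M⁻¹‖) 1, le_max_right _ _, fun x => ⟨?_, ?_⟩⟩
  · exact ((T M).le_opNorm x).trans (by gcongr; exact (le_max_left _ _).trans (le_max_left _ _))
  · exact ((T M⁻¹).le_opNorm x).trans (by gcongr; exact (le_max_right _ _).trans (le_max_left _ _))

theorem Matrix.PosDef.exists_pos_mul_sq_le_inner_mulVecE {H : Matrix (Fin n) (Fin n) ℝ}
    (hH : H.PosDef) : ∃ m > 0, ∀ x, m * ‖x‖ ^ 2 ≤ ⟪x, mulVecE H x⟫_ℝ := by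
  rcases n.eq_zero_or_pos with rfl | hn
  · exact ⟨1, one_pos, fun x => by simp [Subsingleton.elim x 0]⟩
  have : NeZero n := ⟨hn.ne'⟩
  obtain ⟨m, hm, hmH⟩ : ∃ m > 0, algebraMap ℝ _ m ≤ H :=
    (CFC.exists_pos_algebraMap_le_iff hH.isHermitian.isSelfAdjoint).2
      fun _ hx => hH.isStrictlyPositive.spectrum_pos hx
  refine ⟨m, hm, fun x => ?_⟩
  have h := (Matrix.le_iff.1 hmH).dotProduct_mulVec_nonneg x.ofLp
  rw [sub_mulVec, dotProduct_sub, Algebra.algebraMap_eq_smul_one, smul_mulVec, one_mulVec,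
    dotProduct_smul, sub_nonneg, dotProduct_comm] at h
  rw [← real_inner_self_eq_norm_sq, EuclideanSpace.inner_eq_star_dotProduct,
    EuclideanSpace.inner_eq_star_dotProduct]
  simpa [dotProduct_comm, ofLp_mulVecE] using h

end MulVecE

theorem stmt9_general (n : ℕ) (c₁ c₂ q₁ q₂ α₁ α₂ : ℝ)
    (hc₁ : 0 < c₁) (hc₂ : 0 < c₂)
    (hq₁ : 2 < q₁) (hq₂₁ : 1 < q₂) (hq₂₂ : q₂ < 2)
    (hα₁ : α₁ = (q₁ - 2) / (q₁ - 1)) (hα₂ : α₂ = (q₂ - 2) / (q₂ - 1))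
    (H : Matrix (Fin n) (Fin n) ℝ) (hH : H.PosDef)
    (k : ℝ) (hk : 0 < k) :
    ∃ Kstar > (0 : ℝ), ∀ K > Kstar,
      ∃ c > (0 : ℝ),
        ∀ z g : EuclideanSpace ℝ (Fin n), z ≠ 0 → z ≠ g →
          -K * gammaFun c₁ c₂ α₁ α₂ z * ⟪z, mulVecE H z⟫_ℝ
              - k * gammaFun c₁ c₂ α₁ α₂ (mulVecE H⁻¹ (z - g)) * ‖z - g‖ ^ 2
              + 2 * k * gammaFun c₁ c₂ α₁ α₂ (mulVecE H⁻¹ (z - g)) * ⟪z, z - g⟫_ℝ ≤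
            -c * (‖z‖ ^ 2 + ‖g‖ ^ 2) ^ ((2 - α₁) / 2) := by
  have hα₁_nonneg : 0 ≤ α₁ := hα₁ ▸ div_nonneg (by linarith) (by linarith)
  have hα₁_le : α₁ ≤ 1 := hα₁ ▸ (div_le_one (by linarith)).2 (by linarith)
  have hα₂_nonpos : α₂ ≤ 0 := hα₂ ▸ div_nonpos_of_nonpos_of_nonneg (by linarith) (by linarith)
  obtain ⟨m, hm, hHz⟩ := hH.exists_pos_mul_sq_le_inner_mulVecE
  obtain ⟨a, ha, hHa⟩ := exists_bound_norm_mulVecE_and_mulVecE_inv H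
  obtain ⟨Kstar, hKstar, hdecay⟩ :=
    exists_radialGamma_decay_bound hc₁ hc₂.le hα₁_nonneg hα₁_le hα₂_nonpos hk hm ha
  refine ⟨Kstar, hKstar, fun K hK => ?_⟩
  obtain ⟨c, hc, hbound⟩ := hdecay K hK
  refine ⟨c, hc, fun z g hz hzg => ?_⟩
  set u := mulVecE H⁻¹ (z - g)
  have hHu : mulVecE H u = z - g := mulVecE_mulVecE_inv (isUnit_iff_ne_zero.2 hH.det_pos.ne') _
  have hzg' : z - g ≠ 0 := sub_ne_zero.2 hzg
  have hu : u ≠ 0 := fun hu => hzg' (by rw [← hHu, hu, mulVecE_eq_toEuclideanCLM, map_zero])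
  have h := hbound ‖z‖ ‖g‖ ‖z - g‖ ‖u‖ _ (norm_pos_iff.2 hz) (norm_nonneg g)
    (norm_pos_iff.2 hzg') (norm_pos_iff.2 hu) (norm_sub_norm_le z g) (norm_sub_le z g)
    (hHu ▸ (hHa u).1) (hHa _).2 (hHz z)
  rw [gammaFun_eq_radialGamma, gammaFun_eq_radialGamma]
  linear_combination h + k * radialGamma c₁ c₂ α₁ α₂ ‖u‖ * two_mul_inner_sub_sub_norm_sub_sq z g

theorem stmt9 (n : ℕ) (c₁ c₂ q₁ q₂ α₁ α₂ : ℝ)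
    (hc₁ : 0 < c₁) (hc₂ : 0 < c₂)
    (hq₁ : 2 < q₁) (hq₂₁ : 1 < q₂) (hq₂₂ : q₂ < 2)
    (hα₁ : α₁ = (q₁ - 2) / (q₁ - 1)) (hα₂ : α₂ = (q₂ - 2) / (q₂ - 1))
    (H : Matrix (Fin n) (Fin n) ℝ) (hH : H.PosDef) (hHsymm : H.IsSymm)
    (k : ℝ) (hk : 0 < k) :
    ∃ Kstar > (0 : ℝ), ∀ K > Kstar,
      ∃ c > (0 : ℝ),
        ∀ z g : EuclideanSpace ℝ (Fin n), z ≠ 0 → z ≠ g →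
          -K * gammaFun c₁ c₂ α₁ α₂ z * ⟪z, mulVecE H z⟫_ℝ
              - k * gammaFun c₁ c₂ α₁ α₂ (mulVecE H⁻¹ (z - g)) * ‖z - g‖ ^ 2
              + 2 * k * gammaFun c₁ c₂ α₁ α₂ (mulVecE H⁻¹ (z - g)) * ⟪z, z - g⟫_ℝ ≤
            -c * (‖z‖ ^ 2 + ‖g‖ ^ 2) ^ ((2 - α₁) / 2) :=
  stmt9_general n c₁ c₂ q₁ q₂ α₁ α₂ hc₁ hc₂ hq₁ hq₂₁ hq₂₂ hα₁ hα₂ H hH k hk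
end

section
/- Let a ∈ (0,1) and c > 0, and let V : [0,∞) → ℝ be a nonnegative differentiable function satisfying V′(t) ≤ −c·V(t)^{a} for all t ≥ 0. Then V(t) = 0 for all t ≥ V(0)^{1−a} / (c·(1−a)). In particular, V reaches zero in finite time and remains at zero thereafter. -/
theorem stmt11 (a c : ℝ) (ha0 : 0 < a) (ha1 : a < 1) (hc : 0 < c)
    (V V' : ℝ → ℝ)
    (hderiv : ∀ t : ℝ, 0 ≤ t → HasDerivAt V (V' t) t)
    (hnonneg : ∀ t : ℝ, 0 ≤ t → 0 ≤ V t)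
    (hdecay : ∀ t : ℝ, 0 ≤ t → V' t ≤ -c * V t ^ a) :
    ∀ t : ℝ, V 0 ^ (1 - a) / (c * (1 - a)) ≤ t → V t = 0 := by
  set T := V 0 ^ (1 - a) / (c * (1 - a)) with hTdef
  have h1a : 0 < 1 - a := by linarith
  have hca : 0 < c * (1 - a) := by positivity
  have hT0 : 0 ≤ T := div_nonneg (Real.rpow_nonneg (hnonneg 0 le_rfl) _) hca.le
  have hmono : AntitoneOn V (Set.Ici 0) := by
    apply antitoneOn_of_deriv_nonpos (convex_Ici 0)
    · exact fun t ht => (hderiv t ht).continuousAt.continuousWithinAt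
    · intro t ht
      rw [interior_Ici] at ht
      exact ((hderiv t ht.le).differentiableAt).differentiableWithinAt
    · intro t ht
      rw [interior_Ici] at ht
      rw [(hderiv t ht.le).deriv]
      have h1 := hdecay t ht.le
      have h2 : 0 ≤ V t ^ a := Real.rpow_nonneg (hnonneg t ht.le) a
      nlinarith
  have hzero : ∃ t0 ∈ Set.Icc (0:ℝ) T, V t0 = 0 := by
    by_contra h
    push_neg at h
    have hpos : ∀ t ∈ Set.Icc (0:ℝ) T, 0 < V t := fun t ht =>
      lt_of_le_of_ne (hnonneg t ht.1) (Ne.symm (h t ht))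
    have hanti : AntitoneOn (fun t => V t ^ (1-a) + c*(1-a)*t) (Set.Icc 0 T) := by
      apply antitoneOn_of_deriv_nonpos (convex_Icc 0 T)
      · apply ContinuousOn.add
        · exact fun t ht =>
            (((hderiv t ht.1).rpow_const (Or.inl (hpos t ht).ne')).continuousAt).continuousWithinAt
        · fun_prop
      · intro t ht
        rw [interior_Icc] at ht
        exact (((hderiv t ht.1.le).rpow_const
          (Or.inl (hpos t ⟨ht.1.le, ht.2.le⟩).ne')).add
          ((hasDerivAt_id t).const_mul (c*(1-a)))).differentiableAt.differentiableWithinAt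
      · intro t ht
        rw [interior_Icc] at ht
        have ht' : t ∈ Set.Icc (0:ℝ) T := ⟨ht.1.le, ht.2.le⟩
        have hVt := hpos t ht'
        have hd : HasDerivAt (fun s => V s ^ (1-a) + c*(1-a)*s)
            (V' t * (1-a) * V t ^ (1-a-1) + c*(1-a)*1) t := by
          exact ((hderiv t ht'.1).rpow_const (Or.inl hVt.ne')).add
            ((hasDerivAt_id t).const_mul (c*(1-a)))
        rw [hd.deriv]
        have h2 : V' t ≤ -c * V t ^ a := hdecay t ht'.1
        have h3 : (0:ℝ) < V t ^ (1-a-1) := Real.rpow_pos_of_pos hVt _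
        have h4 : V t ^ a * V t ^ (1-a-1) = 1 := by
          rw [← Real.rpow_add hVt]
          norm_num
        have h5 : V' t * V t ^ (1-a-1) ≤ -c := by
          nlinarith [mul_le_mul_of_nonneg_right h2 h3.le]
        nlinarith [mul_le_mul_of_nonneg_left h5 h1a.le]
    have hmem0 : (0:ℝ) ∈ Set.Icc (0:ℝ) T := ⟨le_rfl, hT0⟩
    have hmemT : T ∈ Set.Icc (0:ℝ) T := ⟨hT0, le_rfl⟩
    have := hanti hmem0 hmemT hT0
    simp only at this
    have hTc : c*(1-a)*T = V 0 ^ (1-a) := by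
      rw [hTdef]
      field_simp
    have hVT : (0:ℝ) < V T ^ (1-a) := Real.rpow_pos_of_pos (hpos T hmemT) _
    nlinarith
  obtain ⟨t0, ht0, hVt0⟩ := hzero
  intro t ht
  have h1 : V t ≤ V t0 := hmono (Set.mem_Ici.2 ht0.1) (Set.mem_Ici.2 (hT0.trans ht))
    (ht0.2.trans ht)
  have h2 : 0 ≤ V t := hnonneg t (hT0.trans ht)
  linarith [hVt0 ▸ h1]
end
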